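/- arXiv:1207.4280 — 11 statements merged into one kernel-verified Lean document; each statement's English description precedes it below -/
import Mathlib

section
/- Let m ≥ 2 and let a_1, …, a_m be positive integers with even sum. Then the Kostka numbers satisfy Schubert's recursion: K(a_1, …, a_m) = K(a_1, …, a_{m-2}, a_{m-1} + a_m) + K(a_1, …, a_{m-2}, a_{m-1} − 1, a_m − 1). -/
/-- The Kostka number `K(a₁,…,aₘ)` of the two-rowed rectangular shape `(s,s)`,
where `2s = a₁ + ⋯ + aₘ`: the number of semistandard Young tableaux with two rows
of length `s` (entries weakly increasing along rows, strictly increasing down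
columns) containing exactly `aᵢ` entries equal to `i`.  A tableau is encoded as
`T : Fin 2 → Fin s → Fin m`, where the value `T r c` encodes the entry `(T r c) + 1`
in row `r`, column `c`.  If the sum of the entries is odd, the Kostka number is `0`. -/
noncomputable def kostka (a : List ℕ) : ℕ :=
  if a.sum % 2 = 0 then
    Nat.card {T : Fin 2 → Fin (a.sum / 2) → Fin a.length //
      (∀ r, Monotone (T r)) ∧
      (∀ c, T 0 c < T 1 c) ∧
      (∀ i : Fin a.length,
        Nat.card {p : Fin 2 × Fin (a.sum / 2) // T p.1 p.2 = i} = a.get i)}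
  else 0

/-!
Split the tableaux of content `(a₁, …, aₘ)` according to whether the top-right cell holds `m - 1`.
If it does, the cell below it holds `m`, and deleting this last column is a bijection onto the
tableaux of content `(a₁, …, aₘ₋₁ - 1, aₘ - 1)`. If it does not, no `m - 1` or `m` can occur in the
top row, so these letters fill the end of the bottom row, the `m - 1`'s before the `m`'s; merging
them into a single letter is then a bijection onto the tableaux of content `(a₁, …, aₘ₋₁ + aₘ)`.
-/

open Finset Fin

theorem Fin.apply_eq_iff_sub_card_le_of_monotone {α : Type*} [PartialOrder α] [DecidableEq α]
    {N : ℕ} {f : Fin N → α} (hf : Monotone f) {v : α} (hv : ∀ c, f c ≤ v) (c : Fin N) :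
    f c = v ↔ N - #{c' | f c' = v} ≤ c := by
  have hdown : ∀ i j : Fin N, j ≤ i → f i ≠ v → f j ≠ v := fun i j hji hi hj =>
    hi (le_antisymm (hv i) (hj ▸ hf hji))
  have hcompl : #{c' | f c' ≠ v} = N - #{c' | f c' = v} := by
    have := card_filter_add_card_filter_not (s := univ) (fun c' => f c' = v)
    rw [card_univ, Fintype.card_fin] at this
    simp only [ne_eq]
    omega
  rw [← not_iff_not, not_le, ← hcompl]
  exact (lt_card_filter_univ_iff_apply_of_imp _ hdown).symm

theorem Fin.card_filter_sub_le_val {N k : ℕ} (hk : k ≤ N) :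
    #{c : Fin N | N - k ≤ (c : ℕ)} = k := by
  have := card_filter_add_card_filter_not (s := (univ : Finset (Fin N))) (fun c => (c : ℕ) < N - k)
  simp only [not_lt, card_filter_val_lt, card_univ, Fintype.card_fin] at this
  omega

theorem Fin.monotone_snoc {α : Type*} [Preorder α] {n : ℕ} {f : Fin n → α} {b : α}
    (hf : Monotone f) (hb : ∀ c, f c ≤ b) : Monotone (snoc f b : Fin (n + 1) → α) := by
  intro c c' h
  cases c' using lastCases with
  | last => cases c using lastCases <;> simp [hb]
  | cast j' =>
    cases c using lastCases with
    | last => exact absurd h (not_le.2 (castSucc_lt_last j'))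
    | cast j => simpa using hf (castSucc_le_castSucc_iff.1 h)

theorem Fin.card_filter_snoc_eq {α : Type*} [DecidableEq α] {n : ℕ} (f : Fin n → α) (b a : α) :
    #{c | (snoc f b : Fin (n + 1) → α) c = a} = #{c | f c = a} + if b = a then 1 else 0 := by
  simp only [card_filter, sum_univ_castSucc, snoc_castSucc, snoc_last]

theorem Fin.val_predAbove_last {n : ℕ} (v : Fin (n + 2)) :
    (predAbove (last n) v : ℕ) = min (v : ℕ) n := by
  cases v using lastCases with
  | last => simp
  | cast v => simp [v.is_le]

theorem Fin.castSucc_predAbove_last {n : ℕ} {v : Fin (n + 2)} (hv : v ≠ last (n + 1)) :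
    (predAbove (last n) v).castSucc = v := by
  rw [predAbove_last_of_ne_last hv, castSucc_castPred]

theorem Fin.card_filter_predAbove_last {n N : ℕ} (f : Fin N → Fin (n + 2)) (j : Fin (n + 1)) :
    #{c | predAbove (last n) (f c) = j} =
      #{c | f c = j.castSucc} + if j = last n then #{c | f c = last (n + 1)} else 0 := by
  simp only [card_filter]
  split_ifs with hj
  · rw [← sum_add_distrib]
    refine sum_congr rfl fun c _ => ?_
    cases f c using lastCases with
    | last => simp [hj, (castSucc_lt_last _).ne']
    | cast v => simp [hj]
  · rw [add_zero]
    refine sum_congr rfl fun c _ => ?_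
    cases f c using lastCases with
    | last => simp [hj, eq_comm]
    | cast v => simp

section Tableaux
variable {m s : ℕ}

def content (T : Fin 2 → Fin s → Fin m) (i : Fin m) : ℕ :=
  #{c | T 0 c = i} + #{c | T 1 c = i}

/-- Weights are indexed by `ℕ` rather than by `Fin m` so that the alphabet size `m` can be
rewritten freely. -/
def twoRowTableaux (m s : ℕ) (w : ℕ → ℕ) : Set (Fin 2 → Fin s → Fin m) :=
  {T | (∀ r, Monotone (T r)) ∧ (∀ c, T 0 c < T 1 c) ∧ ∀ i, content T i = w i}

theorem card_cells_eq_content (T : Fin 2 → Fin s → Fin m) (i : Fin m) :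
    Nat.card {p : Fin 2 × Fin s // T p.1 p.2 = i} = content T i := by
  simp only [Nat.card_eq_fintype_card, Fintype.card_subtype, content, card_filter,
    Fintype.sum_prod_type, sum_univ_two]

theorem kostka_eq_ncard (L : List ℕ) (hs : L.sum = 2 * s) :
    kostka L = (twoRowTableaux L.length s (L.getD · 0)).ncard := by
  rw [kostka, if_pos (by omega), show L.sum / 2 = s by omega, ← Nat.card_coe_set_eq]
  refine Nat.card_congr (Equiv.subtypeEquivRight fun T => ?_)
  simp only [card_cells_eq_content, List.get_eq_getElem, twoRowTableaux, Set.mem_ofPred_eq,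
    List.getD_eq_getElem _ _ (Fin.isLt _)]

theorem card_filter_row_one_eq_last {T : Fin 2 → Fin s → Fin (m + 1)} {w : ℕ → ℕ}
    (hT : T ∈ twoRowTableaux (m + 1) s w) : #{c | T 1 c = last m} = w m := by
  have hrow0 : #{c | T 0 c = last m} = 0 :=
    card_eq_zero.2 (filter_eq_empty_iff.2 fun c _ => ((hT.2.1 c).trans_le (le_last _)).ne)
  have := hT.2.2 (last m)
  rwa [content, hrow0, zero_add, val_last] at this

theorem row_one_eq_last_iff {T : Fin 2 → Fin s → Fin (m + 1)} {w : ℕ → ℕ}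
    (hT : T ∈ twoRowTableaux (m + 1) s w) (c : Fin s) : T 1 c = last m ↔ s - w m ≤ c := by
  rw [← card_filter_row_one_eq_last hT]
  exact apply_eq_iff_sub_card_le_of_monotone (hT.1 1) (fun _ => le_last _) c

end Tableaux

section MergeLast
variable {n s t : ℕ} {w w' : ℕ → ℕ}

def mergeLast (T : Fin 2 → Fin s → Fin (n + 2)) : Fin 2 → Fin s → Fin (n + 1) :=
  fun r c => predAbove (last n) (T r c)

def splitLast (y : ℕ) (T : Fin 2 → Fin s → Fin (n + 1)) : Fin 2 → Fin s → Fin (n + 2) :=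
  fun r c => if r = 1 ∧ s - y ≤ (c : ℕ) then last (n + 1) else (T r c).castSucc

theorem content_mergeLast (T : Fin 2 → Fin s → Fin (n + 2)) (j : Fin (n + 1)) :
    content (mergeLast T) j =
      content T j.castSucc + if j = last n then content T (last (n + 1)) else 0 := by
  change #{c | predAbove (last n) (T 0 c) = j} + #{c | predAbove (last n) (T 1 c) = j} = _
  rw [card_filter_predAbove_last, card_filter_predAbove_last, content, content]
  split_ifs <;> omega

theorem splitLast_eq_last_iff (y : ℕ) (T : Fin 2 → Fin s → Fin (n + 1)) (r : Fin 2) (c : Fin s) :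
    splitLast y T r c = last (n + 1) ↔ r = 1 ∧ s - y ≤ (c : ℕ) := by
  unfold splitLast
  split_ifs with h
  · exact iff_of_true rfl h
  · exact iff_of_false (castSucc_lt_last _).ne h

theorem content_splitLast_last (T : Fin 2 → Fin s → Fin (n + 1)) {y : ℕ} (hy : y ≤ s) :
    content (splitLast y T) (last (n + 1)) = y := by
  simp only [content, splitLast_eq_last_iff, zero_ne_one, false_and, filter_false, card_empty,
    true_and, card_filter_sub_le_val hy, zero_add]

theorem monotone_splitLast {T : Fin 2 → Fin s → Fin (n + 1)} (hT : ∀ r, Monotone (T r))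
    (y : ℕ) (r : Fin 2) : Monotone (splitLast y T r) := by
  intro c c' hcc'
  unfold splitLast
  split_ifs with h h'
  · exact le_rfl
  · exact absurd ⟨h.1, h.2.trans (le_def.1 hcc')⟩ h'
  · exact le_last _
  · exact castSucc_le_castSucc_iff.2 (hT r hcc')

theorem splitLast_mergeLast {T : Fin 2 → Fin s → Fin (n + 2)}
    (hT : T ∈ twoRowTableaux (n + 2) s w) : splitLast (w (n + 1)) (mergeLast T) = T := by
  have hlast : ∀ r c, T r c = last (n + 1) ↔ r = 1 ∧ s - w (n + 1) ≤ (c : ℕ) := by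
    refine forall_fin_two.2 ⟨fun c => ?_, fun c => by simpa using row_one_eq_last_iff hT c⟩
    simpa using ((hT.2.1 c).trans_le (le_last _)).ne
  funext r c
  dsimp only [splitLast, mergeLast]
  split_ifs with h
  · exact ((hlast r c).2 h).symm
  · exact castSucc_predAbove_last (mt (hlast r c).1 h)

theorem mergeLast_splitLast {T : Fin 2 → Fin s → Fin (n + 1)} {y : ℕ}
    (hT : T ∈ twoRowTableaux (n + 1) s w') (hy : y ≤ w' n) : mergeLast (splitLast y T) = T := by
  funext r c
  dsimp only [splitLast, mergeLast]
  split_ifs with h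
  · rw [predAbove_right_last, h.1]
    exact ((row_one_eq_last_iff hT c).2 (by omega)).symm
  · exact predAbove_last_castSucc

theorem row_zero_lt_of_topRight_ne {T : Fin 2 → Fin (t + 1) → Fin (n + 2)}
    (hT : T ∈ twoRowTableaux (n + 2) (t + 1) w) (htop : T 0 (last t) ≠ (last n).castSucc)
    (c : Fin (t + 1)) : (T 0 c : ℕ) < n := by
  have hc := le_def.1 (hT.1 0 (le_last c))
  have hlast := lt_def.1 (hT.2.1 (last t))
  have hne : (T 0 (last t) : ℕ) ≠ n := fun h => htop (Fin.ext h)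
  have := (T 1 (last t)).isLt
  omega

theorem mapsTo_mergeLast (hw' : ∀ k < n, w' k = w k) (hw'n : w' n = w n + w (n + 1)) :
    Set.MapsTo mergeLast {T ∈ twoRowTableaux (n + 2) (t + 1) w | T 0 (last t) ≠ (last n).castSucc}
      (twoRowTableaux (n + 1) (t + 1) w') := by
  rintro T ⟨hT, htop⟩
  refine ⟨fun r => (predAbove_right_monotone _).comp (hT.1 r), fun c => ?_, fun j => ?_⟩
  · have hrow0 := row_zero_lt_of_topRight_ne hT htop c
    have hcol := lt_def.1 (hT.2.1 c)
    simp only [mergeLast, lt_def, val_predAbove_last]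
    omega
  · rw [content_mergeLast, hT.2.2, hT.2.2]
    rcases (le_last j).lt_or_eq with hj | rfl
    · rw [if_neg hj.ne, add_zero, val_castSucc, hw' j hj]
    · simp [hw'n]

theorem mapsTo_splitLast (hw' : ∀ k < n, w' k = w k) (hw'n : w' n = w n + w (n + 1)) :
    Set.MapsTo (splitLast (w (n + 1))) (twoRowTableaux (n + 1) (t + 1) w')
      {T ∈ twoRowTableaux (n + 2) (t + 1) w | T 0 (last t) ≠ (last n).castSucc} := by
  intro T hT
  have hy : w (n + 1) ≤ t + 1 := by
    have := card_le_univ (s := ({c | T 1 c = last n} : Finset (Fin (t + 1))))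
    rw [card_filter_row_one_eq_last hT, Fintype.card_fin] at this
    omega
  refine ⟨⟨monotone_splitLast hT.1 _, fun c => ?_, fun i => ?_⟩, ?_⟩
  · change (T 0 c).castSucc < splitLast _ T 1 c
    unfold splitLast
    split_ifs
    exacts [castSucc_lt_last _, castSucc_lt_castSucc_iff.2 (hT.2.1 c)]
  · cases i using lastCases with
    | last => exact content_splitLast_last T hy
    | cast j =>
      -- `mergeLast` undoes `splitLast`, so the content of `T` determines that of `splitLast T`
      have hj := content_mergeLast (splitLast (w (n + 1)) T) j
      rw [mergeLast_splitLast hT (by omega), content_splitLast_last T hy, hT.2.2] at hj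
      rcases (le_last j).lt_or_eq with hj' | rfl
      · rw [if_neg hj'.ne, add_zero, hw' j hj'] at hj
        exact hj.symm
      · simp only [if_true, val_last, hw'n] at hj
        simp only [val_castSucc, val_last]
        omega
  · simp [splitLast, ((hT.2.1 _).trans_le (le_last _)).ne]

theorem bijOn_mergeLast (hw' : ∀ k < n, w' k = w k) (hw'n : w' n = w n + w (n + 1)) :
    Set.BijOn mergeLast {T ∈ twoRowTableaux (n + 2) (t + 1) w | T 0 (last t) ≠ (last n).castSucc}
      (twoRowTableaux (n + 1) (t + 1) w') :=
  Set.InvOn.bijOn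
    ⟨fun _ hT => splitLast_mergeLast hT.1, fun _ hT => mergeLast_splitLast hT (by omega)⟩
    (mapsTo_mergeLast hw' hw'n) (mapsTo_splitLast hw' hw'n)

end MergeLast

section LastColumn
variable {n s t : ℕ} {w w'' : ℕ → ℕ}

def dropLastColumn {α : Type*} (T : Fin 2 → Fin (s + 1) → α) : Fin 2 → Fin s → α :=
  fun r => init (T r)

def snocColumn {α : Type*} (T : Fin 2 → Fin s → α) (v : Fin 2 → α) : Fin 2 → Fin (s + 1) → α :=
  fun r => snoc (T r) (v r)

def lastLetters (n : ℕ) : Fin 2 → Fin (n + 2) :=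
  ![(last n).castSucc, last (n + 1)]

theorem snocColumn_dropLastColumn {α : Type*} (T : Fin 2 → Fin (s + 1) → α) :
    snocColumn (dropLastColumn T) (fun r => T r (last s)) = T :=
  funext fun r => snoc_init_self (T r)

theorem dropLastColumn_snocColumn {α : Type*} (T : Fin 2 → Fin s → α) (v : Fin 2 → α) :
    dropLastColumn (snocColumn T v) = T :=
  funext fun _ => init_snoc _ _

theorem content_snocColumn {m : ℕ} (T : Fin 2 → Fin s → Fin m) (v : Fin 2 → Fin m) (i : Fin m) :
    content (snocColumn T v) i =
      content T i + ((if v 0 = i then 1 else 0) + if v 1 = i then 1 else 0) := by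
  change #{c | (snoc (T 0) (v 0) : Fin (s + 1) → Fin m) c = i} +
    #{c | (snoc (T 1) (v 1) : Fin (s + 1) → Fin m) c = i} = _
  rw [card_filter_snoc_eq, card_filter_snoc_eq, content]
  omega

theorem content_snocColumn_lastLetters_iff (hw'' : ∀ k < n, w'' k = w k)
    (hw''n : w'' n + 1 = w n) (hw''n1 : w'' (n + 1) + 1 = w (n + 1))
    (T : Fin 2 → Fin t → Fin (n + 2)) :
    (∀ i, content (snocColumn T (lastLetters n)) i = w i) ↔ ∀ i, content T i = w'' i := by
  refine forall_congr' fun i => ?_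
  rw [content_snocColumn]
  simp only [lastLetters, Matrix.cons_val_zero, Matrix.cons_val_one, Fin.ext_iff,
    val_castSucc, val_last]
  obtain hi | hi | hi : (i : ℕ) < n ∨ (i : ℕ) = n ∨ (i : ℕ) = n + 1 := by omega
  · have := hw'' i hi
    split_ifs <;> omega
  all_goals
    rw [hi]
    split_ifs <;> omega

theorem lastColumn_eq_lastLetters {T : Fin 2 → Fin (t + 1) → Fin (n + 2)}
    (hT : T ∈ twoRowTableaux (n + 2) (t + 1) w) (htop : T 0 (last t) = (last n).castSucc) :
    (fun r => T r (last t)) = lastLetters n := by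
  have hbottom := hT.2.1 (last t)
  rw [htop, castSucc_lt_iff_succ_le, succ_last, last_le_iff] at hbottom
  funext r
  fin_cases r
  exacts [htop, hbottom]

theorem mapsTo_dropLastColumn (hw'' : ∀ k < n, w'' k = w k)
    (hw''n : w'' n + 1 = w n) (hw''n1 : w'' (n + 1) + 1 = w (n + 1)) :
    Set.MapsTo dropLastColumn
      {T ∈ twoRowTableaux (n + 2) (t + 1) w | T 0 (last t) = (last n).castSucc}
      (twoRowTableaux (n + 2) t w'') := by
  rintro T ⟨hT, htop⟩
  refine ⟨fun r => (hT.1 r).comp strictMono_castSucc.monotone, fun c => hT.2.1 c.castSucc, ?_⟩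
  have hcontent := hT.2.2
  rw [← snocColumn_dropLastColumn T, lastColumn_eq_lastLetters hT htop] at hcontent
  exact (content_snocColumn_lastLetters_iff hw'' hw''n hw''n1 _).1 hcontent

theorem mapsTo_snocColumn_lastLetters (hw'' : ∀ k < n, w'' k = w k)
    (hw''n : w'' n + 1 = w n) (hw''n1 : w'' (n + 1) + 1 = w (n + 1)) :
    Set.MapsTo (snocColumn · (lastLetters n)) (twoRowTableaux (n + 2) t w'')
      {T ∈ twoRowTableaux (n + 2) (t + 1) w | T 0 (last t) = (last n).castSucc} := by
  intro T hT
  have hrow0 (c) : T 0 c ≤ (last n).castSucc := by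
    rw [le_castSucc_iff, succ_last]
    exact (hT.2.1 c).trans_le (le_last _)
  refine ⟨⟨fun r => ?_, fun c => ?_, ?_⟩, ?_⟩
  · fin_cases r
    exacts [monotone_snoc (hT.1 0) hrow0, monotone_snoc (hT.1 1) fun _ => le_last _]
  · cases c using lastCases with
    | last => simp [snocColumn, lastLetters]
    | cast c => simpa [snocColumn] using hT.2.1 c
  · exact (content_snocColumn_lastLetters_iff hw'' hw''n hw''n1 T).2 hT.2.2
  · simp [snocColumn, lastLetters]

theorem bijOn_dropLastColumn (hw'' : ∀ k < n, w'' k = w k)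
    (hw''n : w'' n + 1 = w n) (hw''n1 : w'' (n + 1) + 1 = w (n + 1)) :
    Set.BijOn dropLastColumn
      {T ∈ twoRowTableaux (n + 2) (t + 1) w | T 0 (last t) = (last n).castSucc}
      (twoRowTableaux (n + 2) t w'') :=
  Set.InvOn.bijOn
    ⟨fun T hT => by rw [← lastColumn_eq_lastLetters hT.1 hT.2, snocColumn_dropLastColumn],
      fun T _ => dropLastColumn_snocColumn T _⟩
    (mapsTo_dropLastColumn hw'' hw''n hw''n1) (mapsTo_snocColumn_lastLetters hw'' hw''n hw''n1)

end LastColumn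

theorem ncard_twoRowTableaux_eq_add {n t : ℕ} {w w' w'' : ℕ → ℕ}
    (hw' : ∀ k < n, w' k = w k) (hw'n : w' n = w n + w (n + 1))
    (hw'' : ∀ k < n, w'' k = w k) (hw''n : w'' n + 1 = w n)
    (hw''n1 : w'' (n + 1) + 1 = w (n + 1)) :
    (twoRowTableaux (n + 2) (t + 1) w).ncard =
      (twoRowTableaux (n + 1) (t + 1) w').ncard + (twoRowTableaux (n + 2) t w'').ncard := by
  rw [← Set.ncard_inter_add_ncard_sdiff_eq_ncard _ {T | T 0 (last t) = (last n).castSucc},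
    add_comm]
  exact congrArg₂ (· + ·) (bijOn_mergeLast hw' hw'n).ncard_eq
    (bijOn_dropLastColumn hw'' hw''n hw''n1).ncard_eq

theorem schubert_recursion_general (a : List ℕ) (x y : ℕ)
    (hx : 0 < x) (hy : 0 < y)
    (heven : (a ++ [x, y]).sum % 2 = 0) :
    kostka (a ++ [x, y]) = kostka (a ++ [x + y]) + kostka (a ++ [x - 1, y - 1]) := by
  have hsum : (a ++ [x, y]).sum = a.sum + x + y := by simp [add_assoc]
  obtain ⟨t, ht⟩ : ∃ t, a.sum + x + y = 2 * (t + 1) := ⟨(a.sum + x + y) / 2 - 1, by omega⟩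
  rw [kostka_eq_ncard _ (hsum.trans ht), kostka_eq_ncard (a ++ [x + y]) (s := t + 1) (by simp; omega),
    kostka_eq_ncard (a ++ [x - 1, y - 1]) (s := t) (by simp; omega),
    show (a ++ [x, y]).length = a.length + 2 by simp,
    show (a ++ [x + y]).length = a.length + 1 by simp,
    show (a ++ [x - 1, y - 1]).length = a.length + 2 by simp]
  have hprefix (l l' : List ℕ) (k : ℕ) (hk : k < a.length) :
      (a ++ l).getD k 0 = (a ++ l').getD k 0 := by
    rw [List.getD_append _ _ _ _ hk, List.getD_append _ _ _ _ hk]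
  refine ncard_twoRowTableaux_eq_add (hprefix _ _) ?_ (hprefix _ _) ?_ ?_ <;> simp <;> omega

/-- **Schubert's recursion for Kostka numbers.**
If `a₁,…,aₘ` (here `a ++ [x, y]`, so `m ≥ 2`) are positive integers with even sum, then
`K(a₁,…,aₘ) = K(a₁,…,aₘ₋₂, aₘ₋₁ + aₘ) + K(a₁,…,aₘ₋₂, aₘ₋₁ − 1, aₘ − 1)`. -/
theorem schubert_recursion (a : List ℕ) (x y : ℕ)
    (ha : ∀ b ∈ a, 0 < b) (hx : 0 < x) (hy : 0 < y)
    (heven : (a ++ [x, y]).sum % 2 = 0) :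
    kostka (a ++ [x, y]) = kostka (a ++ [x + y]) + kostka (a ++ [x - 1, y - 1]) :=
  schubert_recursion_general a x y hx hy heven
end

section
/- Let a_• = (a_1, …, a_m) be a valid Schubert problem with even sum 2s, and suppose a_1 + a_2 ≥ n(a_•) = s + 1. Then K(a_1, a_2, a_3, …, a_m) = K(a_1 − 1, a_2 − 1, a_3, …, a_m). -/
lemma Fin.monotone_cons {α : Type*} [Preorder α] {n : ℕ} {f : Fin n → α} {a : α} :
    Monotone (Fin.cons a f : Fin (n + 1) → α) ↔ (∀ j, a ≤ f j) ∧ Monotone f := by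
  rw [monotone_iff_forall_lt, monotone_iff_forall_lt]
  exact Fin.liftFun_cons (· ≤ ·)

namespace Kostka

variable {α : Type*} {n : ℕ}

noncomputable def entryCount (T : Fin 2 → Fin n → α) (i : α) : ℕ :=
  Nat.card {p : Fin 2 × Fin n // T p.1 p.2 = i}

def TwoRowSSYT (n : ℕ) {k : ℕ} (μ : Fin k → ℕ) : Type :=
  {T : Fin 2 → Fin n → Fin k //
    (∀ r, Monotone (T r)) ∧ (∀ c, T 0 c < T 1 c) ∧ ∀ i, entryCount T i = μ i}

theorem kostka_eq_card_twoRowSSYT {a : List ℕ} {s : ℕ} (h : a.sum = 2 * s) :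
    kostka a = Nat.card (TwoRowSSYT s a.get) := by
  rw [kostka, h, if_pos (Nat.mul_mod_right 2 s), Nat.mul_div_cancel_left s two_pos]
  rfl

theorem entryCount_eq_add_entryCount_tail [DecidableEq α] (T : Fin 2 → Fin (n + 1) → α)
    (i : α) :
    entryCount T i = (if T 0 0 = i then 1 else 0) + (if T 1 0 = i then 1 else 0) +
      entryCount (fun r => Fin.tail (T r)) i := by
  simp only [entryCount, Nat.card_eq_fintype_card, Fintype.card_subtype, Finset.card_filter,
    Fintype.sum_prod_type, Fin.sum_univ_succ, Fin.succ_zero_eq_one, Fin.tail]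
  ring

theorem entryCount_add_entryCount_le {T : Fin 2 → Fin n → α} {i j : α} (hij : i ≠ j)
    (hi : ∀ c, T 1 c ≠ i) (hj : ∀ c, T 1 c ≠ j) :
    entryCount T i + entryCount T j ≤ n := by
  have row_zero : ∀ p : Fin 2 × Fin n, T p.1 p.2 = i ∨ T p.1 p.2 = j → p.1 = 0 := by
    rintro ⟨r, c⟩ h
    fin_cases r
    · rfl
    · exact (h.elim (hi c) (hj c)).elim
  have eq_of_snd_eq {p q : Fin 2 × Fin n} (hp : T p.1 p.2 = i ∨ T p.1 p.2 = j)
      (hq : T q.1 q.2 = i ∨ T q.1 q.2 = j) (h : p.2 = q.2) : p = q :=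
    Prod.ext ((row_zero p hp).trans (row_zero q hq).symm) h
  have hinj : Function.Injective (Sum.elim (fun p : {p : Fin 2 × Fin n // T p.1 p.2 = i} => p.1.2)
      (fun p : {p : Fin 2 × Fin n // T p.1 p.2 = j} => p.1.2)) := by
    refine Function.Injective.sumElim (fun p q h => ?_) (fun p q h => ?_) (fun p q h => ?_)
    · exact Subtype.ext (eq_of_snd_eq (.inl p.2) (.inl q.2) h)
    · exact Subtype.ext (eq_of_snd_eq (.inr p.2) (.inr q.2) h)
    · exact hij (by rw [← p.2, ← q.2, eq_of_snd_eq (.inl p.2) (.inr q.2) h])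
  simpa [entryCount, Nat.card_sum] using Nat.card_le_card_of_injective _ hinj

variable {k : ℕ}

theorem first_column_eq_zero_one {T : Fin 2 → Fin (n + 1) → Fin (k + 2)}
    (hrow : ∀ r, Monotone (T r)) (hcol : ∀ c, T 0 c < T 1 c) (h0 : entryCount T 0 ≠ 0)
    (h01 : n + 2 ≤ entryCount T 0 + entryCount T 1) :
    T 0 0 = 0 ∧ T 1 0 = 1 := by
  have row_one_ne_zero (c) : T 1 c ≠ 0 := ((Fin.zero_le _).trans_lt (hcol c)).ne'
  have hT00 : T 0 0 = 0 := by
    obtain ⟨⟨⟨r, c⟩, hrc⟩⟩ := Nat.card_ne_zero.mp h0 |>.1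
    fin_cases r
    · exact le_antisymm (hrc ▸ hrow 0 (Fin.zero_le c)) (Fin.zero_le _)
    · exact (row_one_ne_zero c hrc).elim
  refine ⟨hT00, ?_⟩
  by_contra hT10
  have one_lt : 1 < T 1 0 := by
    have := hT00 ▸ hcol 0
    simp only [Fin.lt_def, Fin.ext_iff, Fin.val_zero, Fin.val_one] at this hT10 ⊢
    omega
  have row_one_ne_one (c) : T 1 c ≠ 1 := (one_lt.trans_le (hrow 1 (Fin.zero_le c))).ne'
  have := entryCount_add_entryCount_le zero_ne_one row_one_ne_zero row_one_ne_one
  omega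

theorem entryCount_eq_of_first_column {T : Fin 2 → Fin (n + 1) → Fin (k + 2)} (h0 : T 0 0 = 0)
    (h1 : T 1 0 = 1) (i : Fin (k + 2)) :
    entryCount T i = entryCount (fun r => Fin.tail (T r)) i +
      (if i = 0 then 1 else 0) + (if i = 1 then 1 else 0) := by
  rw [entryCount_eq_add_entryCount_tail, h0, h1]
  simp only [eq_comm (a := (0 : Fin (k + 2))), eq_comm (a := (1 : Fin (k + 2)))]
  ring

variable {μ μ' : Fin (k + 2) → ℕ}

theorem TwoRowSSYT.first_column_eq_zero_one
    (hμ : ∀ i, μ i = μ' i + (if i = 0 then 1 else 0) + (if i = 1 then 1 else 0))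
    (hn : n ≤ μ' 0 + μ' 1) (T : TwoRowSSYT (n + 1) μ) : T.1 0 0 = 0 ∧ T.1 1 0 = 1 := by
  obtain ⟨T, hrow, hcol, hcount⟩ := T
  refine Kostka.first_column_eq_zero_one hrow hcol ?_ ?_
  · simp [hcount, hμ]
  · simp [hcount, hμ]
    omega

noncomputable def TwoRowSSYT.dropFirstColumn
    (hμ : ∀ i, μ i = μ' i + (if i = 0 then 1 else 0) + (if i = 1 then 1 else 0))
    (hn : n ≤ μ' 0 + μ' 1) : TwoRowSSYT (n + 1) μ ≃ TwoRowSSYT n μ' where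
  toFun T := ⟨fun r => Fin.tail (T.1 r),
    fun r => (T.2.1 r).comp (Fin.strictMono_succ.monotone),
    fun c => T.2.2.1 c.succ,
    fun i => by
      obtain ⟨h0, h1⟩ := T.first_column_eq_zero_one hμ hn
      have := entryCount_eq_of_first_column h0 h1 i
      have := hμ i
      have := T.2.2.2 i
      omega⟩
  invFun S := ⟨fun r => Fin.cons (![0, 1] r) (S.1 r),
    fun r => by
      refine Fin.monotone_cons.mpr ⟨fun c => ?_, S.2.1 r⟩
      fin_cases r
      · exact Fin.zero_le _
      · have := S.2.2.1 c
        simp only [Fin.le_def, Fin.lt_def] at this ⊢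
        simp
        omega,
    fun c => by
      cases c using Fin.cases
      · simp
      · simpa using S.2.2.1 _,
    fun i => by
      rw [entryCount_eq_of_first_column rfl rfl, hμ i]
      simpa using S.2.2.2 i⟩
  left_inv T := by
    obtain ⟨h0, h1⟩ := T.first_column_eq_zero_one hμ hn
    refine Subtype.ext (funext fun r => ?_)
    conv_rhs => rw [← Fin.cons_self_tail (T.1 r)]
    fin_cases r
    · simp [h0]
    · simp [h1]
  right_inv S := rfl

theorem get_cons_cons_eq_get_sub_one {a b : ℕ} {rest : List ℕ} (ha : 0 < a) (hb : 0 < b)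
    (i : Fin (rest.length + 2)) :
    (a :: b :: rest).get i = ((a - 1) :: (b - 1) :: rest).get i +
      (if i = 0 then 1 else 0) + (if i = 1 then 1 else 0) := by
  rcases i with ⟨_ | _ | j, hj⟩ <;> simp [Fin.ext_iff] <;> omega

end Kostka

theorem kostka_reduction_general (a b s : ℕ) (rest : List ℕ)
    (hpos : ∀ x ∈ a :: b :: rest, 0 < x)
    (hsum : (a :: b :: rest).sum = 2 * s)
    (hab : s + 1 ≤ a + b) :
    kostka (a :: b :: rest) = kostka ((a - 1) :: (b - 1) :: rest) := by
  have ha : 0 < a := hpos a (by simp)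
  have hb : 0 < b := hpos b (by simp)
  obtain ⟨t, rfl⟩ : ∃ t, s = t + 1 := ⟨s - 1, by simp at hsum; omega⟩
  have hsum' : ((a - 1) :: (b - 1) :: rest).sum = 2 * t := by
    simp only [List.sum_cons] at hsum ⊢
    omega
  rw [Kostka.kostka_eq_card_twoRowSSYT hsum, Kostka.kostka_eq_card_twoRowSSYT hsum']
  exact Nat.card_congr <|
    Kostka.TwoRowSSYT.dropFirstColumn (Kostka.get_cons_cons_eq_get_sub_one ha hb) (by simp; omega)

/-- If `a₁, a₂, a₃, …, aₘ` is a valid Schubert problem with even sum `2s` and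
`a₁ + a₂ ≥ n(a) = s + 1`, then `K(a₁, a₂, a₃, …, aₘ) = K(a₁ − 1, a₂ − 1, a₃, …, aₘ)`. -/
theorem kostka_reduction (a b s : ℕ) (rest : List ℕ)
    (hpos : ∀ x ∈ a :: b :: rest, 0 < x)
    (hsum : (a :: b :: rest).sum = 2 * s)
    (hvalid : ∀ x ∈ a :: b :: rest, x ≤ s)
    (hab : s + 1 ≤ a + b) :
    kostka (a :: b :: rest) = kostka ((a - 1) :: (b - 1) :: rest) :=
  kostka_reduction_general a b s rest hpos hsum hab
end

section
/- If a_• = (a_1, a_2, a_3, a_4) is a valid Schubert problem, then K(a_•) = 1 + min{ a_i, n(a_•) − 1 − a_j : i, j = 1, …, 4 }, where n(a_•) = s + 1 and 2s = a_1 + a_2 + a_3 + a_4. -/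
open Finset

section CountLe

variable {s m : ℕ}

def countLe (f : Fin s → Fin m) (v : ℕ) : ℕ := #{c | (f c : ℕ) ≤ v}

theorem countLe_le (f : Fin s → Fin m) (v : ℕ) : countLe f v ≤ s :=
  (card_filter_le _ _).trans_eq (card_fin s)

theorem countLe_mono (f : Fin s → Fin m) {v w : ℕ} (h : v ≤ w) : countLe f v ≤ countLe f w :=
  card_le_card fun c => by simp only [mem_filter, mem_univ, true_and]; omega

theorem countLe_of_le (f : Fin s → Fin m) {v : ℕ} (h : m ≤ v + 1) : countLe f v = s := by
  rw [countLe, filter_true_of_mem fun c _ => by omega, card_univ, Fintype.card_fin]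

theorem countLe_zero (f : Fin s → Fin m) : countLe f 0 = #{c | (f c : ℕ) = 0} := by
  simp only [countLe, Nat.le_zero]

theorem countLe_succ (f : Fin s → Fin m) (v : ℕ) :
    countLe f (v + 1) = countLe f v + #{c | (f c : ℕ) = v + 1} := by
  rw [countLe, countLe, ← card_union_of_disjoint (disjoint_filter.2 fun _ _ _ => by omega),
    ← filter_or]
  congr 1
  ext c
  simp only [mem_filter, mem_univ, true_and]
  omega

theorem countLe_eq_min {f : Fin s → Fin m} {v k : ℕ}
    (h : ∀ c : Fin s, (f c : ℕ) ≤ v ↔ (c : ℕ) < k) : countLe f v = min s k := by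
  simp only [countLe, h, Fin.card_filter_val_lt]

theorem countLe_zero_eq_zero_of_lt {f g : Fin s → Fin m} (h : ∀ c, f c < g c) :
    countLe g 0 = 0 := by
  rw [countLe, card_eq_zero, filter_eq_empty_iff]
  intro c _
  have := Fin.lt_def.1 (h c)
  omega

theorem countLe_of_lt {f g : Fin s → Fin m} (h : ∀ c, f c < g c) {v : ℕ} (hv : m ≤ v + 2) :
    countLe f v = s := by
  rw [countLe, filter_true_of_mem fun c _ => ?_, card_univ, Fintype.card_fin]
  have := Fin.lt_def.1 (h c)
  omega

theorem countLe_succ_le_of_lt {f g : Fin s → Fin m} (h : ∀ c, f c < g c) (v : ℕ) :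
    countLe g (v + 1) ≤ countLe f v :=
  card_le_card fun c => by
    have := Fin.lt_def.1 (h c)
    simp only [mem_filter, mem_univ, true_and]
    omega

theorem Monotone.val_le_iff_lt_countLe {f : Fin s → Fin m} (hf : Monotone f) (v : ℕ)
    (c : Fin s) : (f c : ℕ) ≤ v ↔ (c : ℕ) < countLe f v :=
  (Fin.lt_card_filter_univ_iff_apply_of_imp (fun d => (f d : ℕ) ≤ v)
    fun _ _ hji h => (Fin.le_def.1 (hf hji)).trans h).symm

theorem Monotone.eq_of_countLe_eq {f g : Fin s → Fin m} (hf : Monotone f) (hg : Monotone g)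
    (h : ∀ v, countLe f v = countLe g v) : f = g :=
  funext fun c => Fin.ext <| le_antisymm
    ((hf.val_le_iff_lt_countLe _ c).2 (h _ ▸ (hg.val_le_iff_lt_countLe _ c).1 le_rfl))
    ((hg.val_le_iff_lt_countLe _ c).2 (h _ ▸ (hf.val_le_iff_lt_countLe _ c).1 le_rfl))

theorem card_fiber_eq_add (T : Fin 2 → Fin s → Fin m) (i : Fin m) :
    Nat.card {p : Fin 2 × Fin s // T p.1 p.2 = i} =
      #{c | (T 0 c : ℕ) = i} + #{c | (T 1 c : ℕ) = i} := by
  simp only [Nat.card_eq_fintype_card, Fintype.card_subtype, card_filter, Fintype.sum_prod_type,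
    Fin.sum_univ_two, Fin.val_inj]

theorem card_fiber_of_val_eq_zero (T : Fin 2 → Fin s → Fin m) {i : Fin m}
    (hi : (i : ℕ) = 0) :
    Nat.card {p : Fin 2 × Fin s // T p.1 p.2 = i} = countLe (T 0) 0 + countLe (T 1) 0 := by
  rw [card_fiber_eq_add, countLe_zero, countLe_zero, hi]

theorem card_fiber_add_countLe (T : Fin 2 → Fin s → Fin m) {i : Fin m} {v : ℕ}
    (hi : (i : ℕ) = v + 1) :
    Nat.card {p : Fin 2 × Fin s // T p.1 p.2 = i} + countLe (T 0) v + countLe (T 1) v =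
      countLe (T 0) (v + 1) + countLe (T 1) (v + 1) := by
  rw [card_fiber_eq_add, countLe_succ, countLe_succ, hi]
  ring

end CountLe

def stepRow (s k₁ k₂ k₃ : ℕ) : Fin s → Fin 4 := fun c =>
  if (c : ℕ) < k₁ then 0 else if (c : ℕ) < k₂ then 1 else if (c : ℕ) < k₃ then 2 else 3

theorem stepRow_val (s k₁ k₂ k₃ : ℕ) (c : Fin s) :
    (stepRow s k₁ k₂ k₃ c : ℕ) =
      if (c : ℕ) < k₁ then 0 else if (c : ℕ) < k₂ then 1 else if (c : ℕ) < k₃ then 2 else 3 := by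
  unfold stepRow
  split_ifs <;> rfl

theorem stepRow_monotone (s k₁ k₂ k₃ : ℕ) : Monotone (stepRow s k₁ k₂ k₃) := by
  intro c d hcd
  rw [Fin.le_def, stepRow_val, stepRow_val]
  have : (c : ℕ) ≤ d := hcd
  split_ifs <;> omega

theorem countLe_stepRow_zero (s k₁ k₂ k₃ : ℕ) : countLe (stepRow s k₁ k₂ k₃) 0 = min s k₁ :=
  countLe_eq_min fun c => by rw [stepRow_val]; split_ifs <;> omega

theorem countLe_stepRow_one {s k₁ k₂ : ℕ} (k₃ : ℕ) (h : k₁ ≤ k₂) :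
    countLe (stepRow s k₁ k₂ k₃) 1 = min s k₂ :=
  countLe_eq_min fun c => by rw [stepRow_val]; split_ifs <;> omega

theorem countLe_stepRow_two {s k₁ k₂ k₃ : ℕ} (h₁ : k₁ ≤ k₂) (h₂ : k₂ ≤ k₃) :
    countLe (stepRow s k₁ k₂ k₃) 2 = min s k₃ :=
  countLe_eq_min fun c => by rw [stepRow_val]; split_ifs <;> omega

theorem Monotone.eq_stepRow {s : ℕ} {f : Fin s → Fin 4} (hf : Monotone f) :
    f = stepRow s (countLe f 0) (countLe f 1) (countLe f 2) := by
  have h₀₁ := countLe_mono f zero_le_one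
  have h₁₂ := countLe_mono f one_le_two
  have h₂ := countLe_le f 2
  refine hf.eq_of_countLe_eq (stepRow_monotone _ _ _ _) fun
    | 0 => by rw [countLe_stepRow_zero]; omega
    | 1 => by rw [countLe_stepRow_one _ h₀₁]; omega
    | 2 => by rw [countLe_stepRow_two h₀₁ h₁₂]; omega
    | v + 3 => by rw [countLe_of_le _ (by omega), countLe_of_le _ (by omega)]

def IsTableau (a : List ℕ) (s : ℕ) (T : Fin 2 → Fin s → Fin a.length) : Prop :=
  (∀ r, Monotone (T r)) ∧ (∀ c, T 0 c < T 1 c) ∧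
    ∀ i : Fin a.length, Nat.card {p : Fin 2 × Fin s // T p.1 p.2 = i} = a.get i

theorem kostka_eq_card_isTableau {a : List ℕ} {s : ℕ} (hs : a.sum = 2 * s) :
    kostka a = Nat.card {T // IsTableau a s T} := by
  obtain rfl : s = a.sum / 2 := by omega
  rw [kostka, if_pos (by omega)]
  rfl

/-- The tableau with top row `1^a₁ 2^(a₂-t) 3^…` and bottom row `2^t 3^… 4^a₄`. -/
def fourTableau (s a₁ a₂ a₄ t : ℕ) : Fin 2 → Fin s → Fin 4 :=
  ![stepRow s a₁ (a₁ + a₂ - t) s, stepRow s 0 t (s - a₄)]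

section FourRows

variable {a₁ a₂ a₃ a₄ s : ℕ}

theorem content_four_iff (hsum : a₁ + a₂ + a₃ + a₄ = 2 * s) (T : Fin 2 → Fin s → Fin 4) :
    (∀ i : Fin 4, Nat.card {p : Fin 2 × Fin s // T p.1 p.2 = i} = [a₁, a₂, a₃, a₄].get i) ↔
      countLe (T 0) 0 + countLe (T 1) 0 = a₁ ∧
      countLe (T 0) 1 + countLe (T 1) 1 = a₁ + a₂ ∧
      countLe (T 0) 2 + countLe (T 1) 2 = a₁ + a₂ + a₃ := by
  have h₀ := card_fiber_of_val_eq_zero T (i := 0) rfl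
  have h₁ := card_fiber_add_countLe T (i := 1) (v := 0) rfl
  have h₂ := card_fiber_add_countLe T (i := 2) (v := 1) rfl
  have h₃ := card_fiber_add_countLe T (i := 3) (v := 2) rfl
  have hT₀ := countLe_of_le (T 0) (v := 3) le_rfl
  have hT₁ := countLe_of_le (T 1) (v := 3) le_rfl
  simp only [Nat.reduceAdd] at h₁ h₂ h₃
  constructor
  · intro h
    have c₀ := h 0; have c₁ := h 1; have c₂ := h 2
    simp only [List.get] at c₀ c₁ c₂
    omega
  · rintro ⟨e₀, e₁, e₂⟩ i
    fin_cases i <;> simp only [Fin.zero_eta, Fin.mk_one, Fin.reduceFinMk, List.get] <;> omega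

theorem fourTableau_zero (t : ℕ) : fourTableau s a₁ a₂ a₄ t 0 = stepRow s a₁ (a₁ + a₂ - t) s := rfl

theorem fourTableau_one (t : ℕ) : fourTableau s a₁ a₂ a₄ t 1 = stepRow s 0 t (s - a₄) := rfl

theorem IsTableau.countLe_eq (hsum : a₁ + a₂ + a₃ + a₄ = 2 * s)
    {T : Fin 2 → Fin s → Fin 4} (hT : IsTableau [a₁, a₂, a₃, a₄] s T) :
    countLe (T 0) 0 = a₁ ∧ countLe (T 0) 1 + countLe (T 1) 1 = a₁ + a₂ ∧ countLe (T 0) 2 = s ∧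
      countLe (T 1) 0 = 0 ∧ countLe (T 1) 2 = s - a₄ := by
  obtain ⟨-, hcol, hcont⟩ := hT
  obtain ⟨e₀, e₁, e₂⟩ := (content_four_iff hsum T).1 hcont
  have h₀ := countLe_zero_eq_zero_of_lt hcol
  have h₂ := countLe_of_lt hcol (v := 2) le_rfl
  omega

theorem IsTableau.eq_fourTableau (hsum : a₁ + a₂ + a₃ + a₄ = 2 * s)
    {T : Fin 2 → Fin s → Fin 4} (hT : IsTableau [a₁, a₂, a₃, a₄] s T) :
    T = fourTableau s a₁ a₂ a₄ (countLe (T 1) 1) := by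
  obtain ⟨e₀, e₁, e₂, f₀, f₂⟩ := hT.countLe_eq hsum
  refine funext <| Fin.forall_fin_two.2
    ⟨(hT.1 0).eq_stepRow.trans ?_, (hT.1 1).eq_stepRow.trans ?_⟩
  · rw [e₀, e₂, show countLe (T 0) 1 = a₁ + a₂ - countLe (T 1) 1 by omega]
    rfl
  · rw [f₀, f₂]
    rfl

theorem IsTableau.countLe_mem_Icc (hsum : a₁ + a₂ + a₃ + a₄ = 2 * s)
    {T : Fin 2 → Fin s → Fin 4} (hT : IsTableau [a₁, a₂, a₃, a₄] s T) :
    countLe (T 1) 1 ∈ Set.Icc (a₁ + a₂ - s) (min (min a₁ a₂) (min (s - a₃) (s - a₄))) := by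
  obtain ⟨e₀, e₁, e₂, f₀, f₂⟩ := hT.countLe_eq hsum
  have h₁ : countLe (T 1) 1 ≤ countLe (T 0) 0 := countLe_succ_le_of_lt hT.2.1 0
  have h₂ : countLe (T 1) 2 ≤ countLe (T 0) 1 := countLe_succ_le_of_lt hT.2.1 1
  have := countLe_mono (T 0) zero_le_one
  have := countLe_mono (T 1) one_le_two
  have := countLe_le (T 0) 1
  simp only [Set.mem_Icc, le_min_iff]
  omega

theorem countLe_fourTableau_one {t : ℕ} (ht : t ≤ s - a₄) :
    countLe (fourTableau s a₁ a₂ a₄ t 1) 1 = t := by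
  rw [fourTableau_one, countLe_stepRow_one _ t.zero_le]
  omega

theorem isTableau_fourTableau (hsum : a₁ + a₂ + a₃ + a₄ = 2 * s) (h₃ : a₃ ≤ s) (h₄ : a₄ ≤ s) {t : ℕ}
    (ht : t ∈ Set.Icc (a₁ + a₂ - s) (min (min a₁ a₂) (min (s - a₃) (s - a₄)))) :
    IsTableau [a₁, a₂, a₃, a₄] s (fourTableau s a₁ a₂ a₄ t) := by
  simp only [Set.mem_Icc, le_min_iff] at ht
  refine ⟨Fin.forall_fin_two.2 ⟨stepRow_monotone _ _ _ _, stepRow_monotone s 0 t (s - a₄)⟩,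
    fun c => ?_, (content_four_iff hsum _).2 ?_⟩
  · rw [Fin.lt_def, fourTableau_zero, fourTableau_one, stepRow_val, stepRow_val]
    split_ifs <;> omega
  · rw [fourTableau_zero, fourTableau_one, countLe_stepRow_zero, countLe_stepRow_zero,
      countLe_stepRow_one _ (by omega), countLe_stepRow_one _ t.zero_le,
      countLe_stepRow_two (by omega) (by omega), countLe_stepRow_two t.zero_le (by omega)]
    omega

def isTableauEquivIcc (hsum : a₁ + a₂ + a₃ + a₄ = 2 * s) (h₃ : a₃ ≤ s) (h₄ : a₄ ≤ s) :
    {T // IsTableau [a₁, a₂, a₃, a₄] s T} ≃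
      Set.Icc (a₁ + a₂ - s) (min (min a₁ a₂) (min (s - a₃) (s - a₄))) where
  toFun T := ⟨countLe (T.1 1) 1, T.2.countLe_mem_Icc hsum⟩
  invFun t := ⟨fourTableau s a₁ a₂ a₄ t, isTableau_fourTableau hsum h₃ h₄ t.2⟩
  left_inv T := Subtype.ext (T.2.eq_fourTableau hsum).symm
  right_inv t := Subtype.ext (countLe_fourTableau_one (a₁ := a₁) (a₂ := a₂)
    (le_min_iff.1 (le_min_iff.1 t.2.2).2).2)

theorem card_isTableau_four (hsum : a₁ + a₂ + a₃ + a₄ = 2 * s) (h₃ : a₃ ≤ s) (h₄ : a₄ ≤ s) :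
    Nat.card {T // IsTableau [a₁, a₂, a₃, a₄] s T} =
      min (min a₁ a₂) (min (s - a₃) (s - a₄)) + 1 - (a₁ + a₂ - s) := by
  rw [Nat.card_congr (isTableauEquivIcc hsum h₃ h₄), Nat.card_coe_set_eq, Set.ncard_Icc_nat]

end FourRows

theorem kostka_four_general (a1 a2 a3 a4 s : ℕ)
    (hsum : a1 + a2 + a3 + a4 = 2 * s)
    (hv1 : a1 ≤ s) (hv2 : a2 ≤ s) (hv3 : a3 ≤ s) (hv4 : a4 ≤ s) :
    kostka [a1, a2, a3, a4] =
      1 + min (min (min a1 a2) (min a3 a4))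
              (min (min (s - a1) (s - a2)) (min (s - a3) (s - a4))) := by
  have hs : [a1, a2, a3, a4].sum = 2 * s := by simp only [List.sum_cons, List.sum_nil]; omega
  rw [kostka_eq_card_isTableau hs, card_isTableau_four hsum hv3 hv4,
    min_min_min_comm (min a1 a2)]
  -- which lower bound of `t` is active decides which half of the eight terms attains the minimum
  rcases le_total (a1 + a2) s with h | h
  · rw [min_eq_left (by omega : min a1 a2 ≤ min (s - a1) (s - a2)),
      min_eq_right (by omega : min (s - a3) (s - a4) ≤ min a3 a4)]
    omega
  · rw [min_eq_right (by omega : min (s - a1) (s - a2) ≤ min a1 a2),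
      min_eq_left (by omega : min a3 a4 ≤ min (s - a3) (s - a4))]
    omega

/-- If `(a₁, a₂, a₃, a₄)` is a valid Schubert problem with sum `2s`, then
`K(a₁,a₂,a₃,a₄) = 1 + min{aᵢ, s − aⱼ : i, j = 1,…,4}` (here `n(a) − 1 = s`). -/
theorem kostka_four (a1 a2 a3 a4 s : ℕ)
    (h1 : 0 < a1) (h2 : 0 < a2) (h3 : 0 < a3) (h4 : 0 < a4)
    (hsum : a1 + a2 + a3 + a4 = 2 * s)
    (hv1 : a1 ≤ s) (hv2 : a2 ≤ s) (hv3 : a3 ≤ s) (hv4 : a4 ≤ s) :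
    kostka [a1, a2, a3, a4] =
      1 + min (min (min a1 a2) (min a3 a4))
              (min (min (s - a1) (s - a2)) (min (s - a3) (s - a4))) :=
  kostka_four_general a1 a2 a3 a4 s hsum hv1 hv2 hv3 hv4
end

section
/- Let a = 2b with b ≥ 1 a positive integer. Then K(a, a, a, a−1, a−1) = (5b² + 3b)/2. -/
/-!
A row of a tableau is a monotone map `f`, determined by its cumulative counts `countLT f k`,
the number of entries `< k`. Column strictness of two rows `f, g` is the ballot condition
`countLT g (k + 1) ≤ countLT f k`, and the content prescribes `countLT f k + countLT g k`.
For the content `(2b, 2b, 2b, 2b-1, 2b-1)` these constraints determine every cumulative count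
from the numbers `u ≤ v` of entries at most `2`, resp. at most `3`, in the second row, and they
say exactly that `(u, v)` is a lattice point of the polygon `b + 1 ≤ v ≤ 3b`,
`v - 2b ≤ u ≤ min v (4b - v)`. Its horizontal slices have lengths `v + 1` for `v ≤ 2b` and
`6b + 1 - 2v` beyond; pairing the slices at `b + 1 + k` and `2b + 1 + k` gives
`∑_{k < b} (3b + 1 - k) = (5b² + 3b) / 2`.
-/

open Finset

section CountLT

variable {α : Type*} [Fintype α] {m : ℕ}

def countLT (f : α → Fin m) (k : ℕ) : ℕ := #{x | (f x : ℕ) < k}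

lemma countLT_zero (f : α → Fin m) : countLT f 0 = 0 := by simp [countLT]

lemma countLT_succ (f : α → Fin m) (k : ℕ) :
    countLT f (k + 1) = countLT f k + #{x | (f x : ℕ) = k} := by
  classical
  rw [countLT, countLT, ← card_union_of_disjoint (disjoint_filter.2 fun _ _ h => h.ne),
    ← filter_or]
  simp only [Nat.lt_succ_iff_lt_or_eq]

lemma countLT_mono (f : α → Fin m) : Monotone (countLT f) := fun _ _ h =>
  card_le_card (monotone_filter_right _ fun _ _ hx => lt_of_lt_of_le hx h)

lemma countLT_le_card (f : α → Fin m) (k : ℕ) : countLT f k ≤ Fintype.card α :=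
  card_le_univ _

lemma countLT_of_le (f : α → Fin m) {k : ℕ} (hk : m ≤ k) :
    countLT f k = Fintype.card α := by
  rw [countLT, filter_true_of_mem fun x _ => (f x).2.trans_le hk, card_univ]

lemma card_fiber_eq_get_iff_countLT (a : List ℕ) (f : α → Fin a.length) :
    (∀ i, #{x | f x = i} = a.get i) ↔ ∀ k ≤ a.length, countLT f k = (a.take k).sum := by
  simp_rw [Fin.ext_iff]
  constructor
  · intro h k hk
    induction k with
    | zero => simp [countLT_zero]
    | succ k ih =>
      rw [countLT_succ, ih (by omega), List.sum_take_succ _ _ hk, h ⟨k, hk⟩,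
        List.get_eq_getElem]
  · intro h i
    have h1 := h (i + 1) i.2
    rw [countLT_succ, h i i.2.le, List.sum_take_succ _ _ i.2] at h1
    simpa using h1

lemma countLT_uncurry {s : ℕ} (T : Fin 2 → Fin s → Fin m) (k : ℕ) :
    countLT (fun p : Fin 2 × Fin s => T p.1 p.2) k = countLT (T 0) k + countLT (T 1) k := by
  simp only [countLT, card_filter, Fintype.sum_prod_type, Fin.sum_univ_two]

end CountLT

section MonotoneRow

variable {n m : ℕ}

lemma lt_countLT_iff {f : Fin n → Fin m} (hf : Monotone f) (c : Fin n) (k : ℕ) :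
    (c : ℕ) < countLT f k ↔ (f c : ℕ) < k := by
  constructor
  · intro hc
    by_contra! hk
    have hsub : ({x | (f x : ℕ) < k} : Finset (Fin n)) ⊆ Iio c := fun x hx => by
      simp only [mem_filter, mem_univ, true_and, mem_Iio] at hx ⊢
      by_contra! hcx
      exact absurd (hf hcx) (by rw [Fin.le_def]; omega)
    have := card_le_card hsub
    rw [Fin.card_Iio] at this
    exact absurd hc (by rw [countLT]; omega)
  · intro hk
    have hsub : Iic c ⊆ ({x | (f x : ℕ) < k} : Finset (Fin n)) := fun x hx => by
      simp only [mem_filter, mem_univ, true_and]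
      exact lt_of_le_of_lt (hf (mem_Iic.1 hx)) hk
    have := card_le_card hsub
    rw [Fin.card_Iic] at this
    exact this

lemma forall_lt_iff_countLT {f g : Fin n → Fin m} (hf : Monotone f) (hg : Monotone g) :
    (∀ c, f c < g c) ↔ ∀ k, countLT g (k + 1) ≤ countLT f k := by
  constructor
  · intro h k
    by_contra! H
    have hn : countLT f k < n := H.trans_le (by simpa using countLT_le_card g (k + 1))
    let c : Fin n := ⟨countLT f k, hn⟩
    have hgc := (lt_countLT_iff hg c (k + 1)).1 H
    have hfc := (lt_countLT_iff hf c k).2 (by have := h c; rw [Fin.lt_def] at this; omega)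
    exact lt_irrefl _ hfc
  · intro h c
    have hc := (lt_countLT_iff hg c (g c + 1)).2 (Nat.lt_succ_self _)
    exact (lt_countLT_iff hf c (g c)).1 (hc.trans_le (h _))

def ofThresholds (t : Fin m → ℕ) (c : Fin n) : Fin (m + 1) :=
  ⟨#{k | t k ≤ (c : ℕ)}, Nat.lt_succ_of_le ((card_le_univ _).trans (Fintype.card_fin m).le)⟩

lemma monotone_ofThresholds (t : Fin m → ℕ) : Monotone (ofThresholds (n := n) t) :=
  fun _ _ h => Fin.mk_le_mk.2 <|
    card_le_card <| monotone_filter_right _ fun _ _ hk => le_trans hk (Fin.le_def.1 h)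

lemma ofThresholds_lt_iff {t : Fin m → ℕ} (ht : Monotone t) (c : Fin n) (k : Fin m) :
    (ofThresholds t c : ℕ) < k + 1 ↔ (c : ℕ) < t k := by
  constructor
  · intro hc
    by_contra! hk
    have hsub : Iic k ⊆ ({j | t j ≤ (c : ℕ)} : Finset (Fin m)) := fun j hj => by
      simp only [mem_filter, mem_univ, true_and]
      exact (ht (mem_Iic.1 hj)).trans hk
    have := card_le_card hsub
    rw [Fin.card_Iic] at this
    exact absurd hc (by simp only [ofThresholds]; omega)
  · intro hc
    have hsub : ({j | t j ≤ (c : ℕ)} : Finset (Fin m)) ⊆ Iio k := fun j hj => by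
      simp only [mem_filter, mem_univ, true_and, mem_Iio] at hj ⊢
      by_contra! hkj
      exact absurd (ht hkj) (by omega)
    have := card_le_card hsub
    rw [Fin.card_Iio] at this
    simp only [ofThresholds]
    omega

lemma countLT_ofThresholds {t : Fin m → ℕ} (ht : Monotone t) (k : Fin m) (hk : t k ≤ n) :
    countLT (ofThresholds (n := n) t) (k + 1) = t k := by
  simp only [countLT, ofThresholds_lt_iff ht, Fin.card_filter_val_lt, min_eq_right hk]

lemma ofThresholds_countLT {f : Fin n → Fin (m + 1)} (hf : Monotone f) :
    ofThresholds (fun k : Fin m => countLT f (k + 1)) = f := by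
  ext c
  simp only [ofThresholds, ← not_lt, lt_countLT_iff hf, Nat.lt_succ_iff]
  simp only [not_not, Fin.card_filter_val_lt]
  exact min_eq_right (Nat.lt_succ_iff.1 (f c).2)

end MonotoneRow

def IsTwoRowSSYT (a : List ℕ) {s : ℕ} (T : Fin 2 → Fin s → Fin a.length) : Prop :=
  (∀ r, Monotone (T r)) ∧ (∀ c, T 0 c < T 1 c) ∧
    ∀ i, Nat.card {p : Fin 2 × Fin s // T p.1 p.2 = i} = a.get i

lemma kostka_eq_card (a : List ℕ) (h : a.sum % 2 = 0) :
    kostka a = Nat.card {T : Fin 2 → Fin (a.sum / 2) → Fin a.length // IsTwoRowSSYT a T} := by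
  rw [kostka, if_pos h]
  rfl

lemma isTwoRowSSYT_iff {a : List ℕ} {s : ℕ} {T : Fin 2 → Fin s → Fin a.length} :
    IsTwoRowSSYT a T ↔ (∀ r, Monotone (T r)) ∧
      (∀ k, countLT (T 1) (k + 1) ≤ countLT (T 0) k) ∧
      ∀ k ≤ a.length, countLT (T 0) k + countLT (T 1) k = (a.take k).sum := by
  refine and_congr_right fun hT => and_congr (forall_lt_iff_countLT (hT 0) (hT 1)) ?_
  simp_rw [Nat.card_eq_fintype_card, Fintype.card_subtype, ← countLT_uncurry]
  exact card_fiber_eq_get_iff_countLT a _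

def region (b : ℕ) : Finset (Σ _ : ℕ, ℕ) :=
  (Icc (b + 1) (3 * b)).sigma fun v => Icc (v - 2 * b) (min v (4 * b - v))

lemma mem_region {b u v : ℕ} : ⟨v, u⟩ ∈ region b ↔
    b + 1 ≤ v ∧ v ≤ 3 * b ∧ v ≤ 2 * b + u ∧ u ≤ v ∧ u + v ≤ 4 * b := by
  simp only [region, mem_sigma, mem_Icc, le_min_iff]
  omega

lemma sum_range_three_mul_add_one_sub_mul_two (b : ℕ) :
    (∑ k ∈ range b, (3 * b + 1 - k)) * 2 = 5 * b ^ 2 + 3 * b := by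
  rw [← sum_range_reflect, sum_congr rfl fun k hk => (by
    rw [mem_range] at hk; omega : 3 * b + 1 - (b - 1 - k) = 2 * b + 2 + k),
    sum_add_distrib, sum_const, card_range, smul_eq_mul, add_mul, sum_range_id_mul_two]
  cases b with
  | zero => rfl
  | succ b => simp only [Nat.add_sub_cancel]; ring

lemma card_region (b : ℕ) : #(region b) = (5 * b ^ 2 + 3 * b) / 2 := by
  have hsplit : ∑ v ∈ Icc (b + 1) (3 * b), #(Icc (v - 2 * b) (min v (4 * b - v))) =
      ∑ k ∈ range b, (3 * b + 1 - k) := by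
    rw [← Ico_add_one_right_eq_Icc,
      ← sum_Ico_consecutive _ (by omega : b + 1 ≤ 2 * b + 1) (by omega),
      sum_Ico_eq_sum_range, sum_Ico_eq_sum_range,
      show 2 * b + 1 - (b + 1) = b by omega, show 3 * b + 1 - (2 * b + 1) = b by omega,
      ← sum_add_distrib]
    refine sum_congr rfl fun k hk => ?_
    simp only [Nat.card_Icc, mem_range] at hk ⊢
    omega
  rw [region, card_sigma, hsplit]
  have := sum_range_three_mul_add_one_sub_mul_two b
  omega

def tableau (b u v : ℕ) : Fin 2 → Fin (5 * b - 1) → Fin 5 :=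
  ![ofThresholds ![2 * b, 4 * b - u, 6 * b - v, 5 * b - 1], ofThresholds ![0, u, v, 3 * b]]

lemma countLT_tableau_zero {b u v : ℕ} (h : ⟨v, u⟩ ∈ region b) (k : Fin 4) :
    countLT (tableau b u v 0) (k + 1) = ![2 * b, 4 * b - u, 6 * b - v, 5 * b - 1] k := by
  rw [mem_region] at h
  have ht : Monotone ![2 * b, 4 * b - u, 6 * b - v, 5 * b - 1] := by
    simp only [Nat.succ_eq_add_one, Nat.reduceAdd, monotone_vecCons, Matrix.cons_val_zero,
      Matrix.cons_val_fin_one, monotone_vecEmpty, and_true]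
    omega
  exact countLT_ofThresholds ht k ((ht (Fin.le_last k)).trans le_rfl)

lemma countLT_tableau_one {b u v : ℕ} (h : ⟨v, u⟩ ∈ region b) (k : Fin 4) :
    countLT (tableau b u v 1) (k + 1) = ![0, u, v, 3 * b] k := by
  rw [mem_region] at h
  have ht : Monotone ![0, u, v, 3 * b] := by
    simp only [Nat.succ_eq_add_one, Nat.reduceAdd, monotone_vecCons, Matrix.cons_val_zero,
      Matrix.cons_val_fin_one, monotone_vecEmpty, and_true]
    omega
  refine countLT_ofThresholds ht k ((ht (Fin.le_last k)).trans ?_)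
  simp only [Fin.reduceLast, Matrix.cons_val]
  omega

lemma isTwoRowSSYT_tableau {b u v : ℕ} (h : ⟨v, u⟩ ∈ region b) :
    IsTwoRowSSYT [2 * b, 2 * b, 2 * b, 2 * b - 1, 2 * b - 1] (tableau b u v) := by
  have F₁ : countLT (tableau b u v 0) 1 = 2 * b := countLT_tableau_zero h 0
  have F₂ : countLT (tableau b u v 0) 2 = 4 * b - u := countLT_tableau_zero h 1
  have F₃ : countLT (tableau b u v 0) 3 = 6 * b - v := countLT_tableau_zero h 2
  have F₄ : countLT (tableau b u v 0) 4 = 5 * b - 1 := countLT_tableau_zero h 3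
  have G₁ : countLT (tableau b u v 1) 1 = 0 := countLT_tableau_one h 0
  have G₂ : countLT (tableau b u v 1) 2 = u := countLT_tableau_one h 1
  have G₃ : countLT (tableau b u v 1) 3 = v := countLT_tableau_one h 2
  have G₄ : countLT (tableau b u v 1) 4 = 3 * b := countLT_tableau_one h 3
  have top : ∀ r k, 5 ≤ k → countLT (tableau b u v r) k = 5 * b - 1 := fun r k hk => by
    rw [countLT_of_le _ hk, Fintype.card_fin]
  rw [mem_region] at h
  rw [isTwoRowSSYT_iff]
  refine ⟨fun r => by fin_cases r <;> exact monotone_ofThresholds _, fun k => ?_,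
    fun k hk => ?_⟩
  · match k with
    | 0 | 1 | 2 | 3 => simp only [Nat.reduceAdd, countLT_zero]; omega
    | 4 => rw [top 1 5 le_rfl]; omega
    | k + 5 => rw [top 0 _ (by omega)]; simpa using countLT_le_card (tableau b u v 1) (k + 6)
  · simp only [List.length_cons, List.length_nil] at hk
    interval_cases k <;>
      simp only [List.take_succ_cons, List.take_zero, List.take_nil, List.sum_cons, List.sum_nil,
        countLT_zero, F₁, F₂, F₃, F₄, G₁, G₂, G₃, G₄, top _ 5 le_rfl] <;> omega

lemma mem_region_and_eq_tableau {b : ℕ} (hb : 1 ≤ b) {T : Fin 2 → Fin (5 * b - 1) → Fin 5}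
    (hT : IsTwoRowSSYT [2 * b, 2 * b, 2 * b, 2 * b - 1, 2 * b - 1] T) :
    ⟨countLT (T 1) 3, countLT (T 1) 2⟩ ∈ region b ∧
      T = tableau b (countLT (T 1) 2) (countLT (T 1) 3) := by
  obtain ⟨hmono, hballot, hcontent⟩ := isTwoRowSSYT_iff.1 hT
  have c₁ := hcontent 1 (by simp)
  have c₂ := hcontent 2 (by simp)
  have c₃ := hcontent 3 (by simp)
  have c₄ := hcontent 4 (by simp)
  have b₀ := hballot 0
  have b₁ := hballot 1
  have b₂ := hballot 2
  have b₃ := hballot 3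
  have b₄ := hballot 4
  have top : ∀ r, countLT (T r) 5 = 5 * b - 1 := fun r => by
    rw [countLT_of_le _ le_rfl, Fintype.card_fin]
  have F₄ := countLT_le_card (T 0) 4
  have mF := countLT_mono (T 0) (show 2 ≤ 3 by omega)
  have mF' := countLT_mono (T 0) (show 3 ≤ 4 by omega)
  have mG := countLT_mono (T 1) (show 2 ≤ 3 by omega)
  simp only [List.take, List.sum_cons, List.sum_nil, Nat.reduceAdd, countLT_zero, top,
    Fintype.card_fin] at c₁ c₂ c₃ c₄ b₀ b₁ b₂ b₃ b₄ F₄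
  refine ⟨mem_region.2 (by omega), ?_⟩
  set u := countLT (T 1) 2
  set v := countLT (T 1) 3
  funext r
  rw [← ofThresholds_countLT (hmono r)]
  fin_cases r <;> refine congrArg ofThresholds (funext fun k => ?_) <;> fin_cases k <;>
    simp only [Fin.reduceFinMk, Fin.isValue, Nat.reduceAdd, Matrix.cons_val] <;> omega

def regionEquivSSYT {b : ℕ} (hb : 1 ≤ b) : region b ≃
    {T : Fin 2 → Fin (5 * b - 1) → Fin 5 //
      IsTwoRowSSYT [2 * b, 2 * b, 2 * b, 2 * b - 1, 2 * b - 1] T} where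
  toFun q := ⟨tableau b q.1.2 q.1.1, isTwoRowSSYT_tableau q.2⟩
  invFun T := ⟨⟨countLT (T.1 1) 3, countLT (T.1 1) 2⟩, (mem_region_and_eq_tableau hb T.2).1⟩
  left_inv := by
    rintro ⟨⟨v, u⟩, h⟩
    ext
    exacts [countLT_tableau_one h 2, heq_of_eq (countLT_tableau_one h 1)]
  right_inv T := Subtype.ext (mem_region_and_eq_tableau hb T.2).2.symm

/-- For `a = 2b` with `b ≥ 1`, the Kostka number
`K(a, a, a, a−1, a−1) = (5b² + 3b)/2`. -/
theorem kostka_aaa_am1_am1 (b : ℕ) (hb : 1 ≤ b) :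
    kostka [2 * b, 2 * b, 2 * b, 2 * b - 1, 2 * b - 1] = (5 * b ^ 2 + 3 * b) / 2 := by
  have hsum : [2 * b, 2 * b, 2 * b, 2 * b - 1, 2 * b - 1].sum = 2 * (5 * b - 1) := by
    simp only [List.sum_cons, List.sum_nil]
    omega
  rw [kostka_eq_card _ (by omega), hsum, Nat.mul_div_cancel_left _ two_pos, ← card_region,
    ← Nat.card_eq_finsetCard]
  exact (Nat.card_congr (regionEquivSSYT hb)).symm
end

section
/- Suppose a_• = (b_1, …, b_μ, α, β, γ) is a reduced Schubert problem, where α ≤ β ≤ γ and α < γ. Then K(b_1, …, b_μ, α, β + γ) < K(b_1, …, b_μ, γ, β + α). -/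
/-!
Write `n` for the length of `bs`, so that the content `(bs, α, β + γ)` uses the letters
`0, …, n + 1`. In a tableau of this content the `β + γ` copies of the largest letter `n + 1` fill
the end of the second row. Relabelling the first `γ - α` of them as `n` keeps the tableau
semistandard, because the at most `α` copies of `n` in the first row sit in its last `α` columns,
and it produces the content `(bs, γ, β + α)`. This is injective, and every image carries the
letter `n` in column `s - (β + γ)` of the second row.

A tableau of content `(bs, γ, β + α)` without that letter there is given by its cumulative letter
counts: the first row takes the letters of `bs` in order up to column `s - α - 1` and ends with
`α + 1` copies of `n`; the second row takes the rest of `bs`, then `γ - α - 1` copies of `n`, then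
`β + α` copies of `n + 1`. Its columns increase strictly because each `b + γ ≤ s`.
-/

open Finset

theorem Fin.card_filter_le_val_lt {s lo hi : ℕ} (h : hi ≤ s) :
    #{c : Fin s | lo ≤ c.val ∧ c.val < hi} = hi - lo := by
  rw [← Nat.card_Ico, ← card_map Fin.valEmbedding]
  congr 1
  ext x
  simp only [mem_map, mem_filter, mem_univ, true_and, Fin.valEmbedding_apply, mem_Ico]
  exact ⟨fun ⟨c, hc, hcx⟩ => hcx ▸ hc, fun hx => ⟨⟨x, by omega⟩, hx, rfl⟩⟩

theorem Monotone.apply_eq_iff_le_of_forall_le {n : ℕ} {β : Type*} [PartialOrder β]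
    [DecidableEq β] {f : Fin n → β} (hf : Monotone f) {v : β} (hv : ∀ c, f c ≤ v) (c : Fin n) :
    f c = v ↔ n - #{x | f x = v} ≤ c.val := by
  have hup : ∀ {x y}, x ≤ y → f x = v → f y = v := fun hxy hx =>
    le_antisymm (hv _) (hx ▸ hf hxy)
  constructor
  · intro hc
    have hsub : Ici c ⊆ ({x | f x = v} : Finset (Fin n)) := fun x hx => by
      simpa using hup (mem_Ici.1 hx) hc
    have := card_le_card hsub
    rw [Fin.card_Ici] at this
    omega
  · intro hc
    by_contra hne
    have hsub : ({x | f x = v} : Finset (Fin n)) ⊆ Ioi c := fun x hx => by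
      simp only [mem_filter, mem_univ, true_and] at hx
      exact mem_Ioi.2 (lt_of_not_ge fun hxc => hne (hup hxc hx))
    have := card_le_card hsub
    rw [Fin.card_Ioi] at this
    omega

theorem card_filter_add_ite_eq {ι β : Type*} [Fintype ι] [DecidableEq ι] [DecidableEq β]
    {g g' : ι → β} {R : Finset ι} {a b : β} (hg : ∀ x ∈ R, g x = a) (hg' : ∀ x ∈ R, g' x = b)
    (hout : ∀ x ∉ R, g' x = g x) (i : β) :
    #{x | g' x = i} + (if a = i then #R else 0) = #{x | g x = i} + (if b = i then #R else 0) := by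
  have hsplit (h : ι → β) : #{x | h x = i} =
      ∑ x ∈ R, (if h x = i then 1 else 0) + ∑ x ∈ Rᶜ, (if h x = i then 1 else 0) := by
    rw [card_filter, sum_add_sum_compl]
  have hin (h : ι → β) (c : β) (hc : ∀ x ∈ R, h x = c) :
      ∑ x ∈ R, (if h x = i then 1 else 0) = if c = i then #R else 0 := by
    rw [sum_congr rfl fun x hx => by rw [hc x hx]]
    split_ifs <;> simp
  have hcompl : ∑ x ∈ Rᶜ, (if g' x = i then 1 else 0) = ∑ x ∈ Rᶜ, (if g x = i then 1 else 0) :=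
    sum_congr rfl fun x hx => by rw [hout x (mem_compl.1 hx)]
  rw [hsplit g, hsplit g', hin g a hg, hin g' b hg', hcompl]
  ring

structure IsTwoRowTableau {m : ℕ} (s : ℕ) (f : Fin m → ℕ) (T : Fin 2 → Fin s → Fin m) :
    Prop where
  monotone : ∀ r, Monotone (T r)
  lt : ∀ c, T 0 c < T 1 c
  card_eq : ∀ i, #{c | T 0 c = i} + #{c | T 1 c = i} = f i

theorem kostka_eq_card_s8 {a : List ℕ} {m s : ℕ} (hm : a.length = m) (hs : a.sum = 2 * s) :
    kostka a = Nat.card {T : Fin 2 → Fin s → Fin m //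
      IsTwoRowTableau s (fun i => a[i.val]'(i.isLt.trans_eq hm.symm)) T} := by
  subst hm
  obtain rfl : s = a.sum / 2 := by omega
  have hcells (T : Fin 2 → Fin (a.sum / 2) → Fin a.length) (i : Fin a.length) :
      Nat.card {p : Fin 2 × Fin (a.sum / 2) // T p.1 p.2 = i} =
        #{c | T 0 c = i} + #{c | T 1 c = i} := by
    rw [Nat.card_eq_fintype_card, Fintype.card_subtype, card_filter, Fintype.sum_prod_type,
      Fin.sum_univ_two, card_filter, card_filter]
  rw [kostka, if_pos (by omega)]
  refine Nat.card_congr (Equiv.subtypeEquivRight fun T => ?_)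
  simp only [hcells, List.get_eq_getElem]
  exact ⟨fun ⟨h1, h2, h3⟩ => ⟨h1, h2, h3⟩, fun ⟨h1, h2, h3⟩ => ⟨h1, h2, h3⟩⟩

section DemoteTop

variable {n s : ℕ}

def demoteTop (lo k : ℕ) (T : Fin 2 → Fin s → Fin (n + 2)) : Fin 2 → Fin s → Fin (n + 2) :=
  fun r c => if r = 1 ∧ lo ≤ c.val ∧ c.val < lo + k then (Fin.last n).castSucc else T r c

variable {lo k : ℕ} {T : Fin 2 → Fin s → Fin (n + 2)}

@[simp]
theorem demoteTop_zero : demoteTop lo k T 0 = T 0 :=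
  funext fun _ => if_neg fun h => absurd h.1 (by decide)

theorem demoteTop_one (c : Fin s) : demoteTop lo k T 1 c =
    if lo ≤ c.val ∧ c.val < lo + k then (Fin.last n).castSucc else T 1 c := by
  simp [demoteTop]

end DemoteTop

namespace IsTwoRowTableau

variable {n s : ℕ} {f : Fin (n + 2) → ℕ} {T : Fin 2 → Fin s → Fin (n + 2)}

theorem row_zero_le_castSucc_last (hT : IsTwoRowTableau s f T) (c : Fin s) :
    T 0 c ≤ (Fin.last n).castSucc :=
  Fin.le_castSucc_iff.2 ((hT.lt c).trans_le (Fin.le_last _))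

theorem card_row_one_last (hT : IsTwoRowTableau s f T) :
    #{c | T 1 c = Fin.last (n + 1)} = f (Fin.last (n + 1)) := by
  have hrow0 : #{c | T 0 c = Fin.last (n + 1)} = 0 := by
    rw [card_eq_zero, filter_eq_empty_iff]
    exact fun c _ => ((hT.lt c).trans_le (Fin.le_last _)).ne
  rw [← hT.card_eq, hrow0, zero_add]

theorem apply_last_le (hT : IsTwoRowTableau s f T) : f (Fin.last (n + 1)) ≤ s :=
  hT.card_row_one_last ▸ (card_filter_le _ _).trans_eq (card_fin s)

theorem row_one_eq_last_iff (hT : IsTwoRowTableau s f T) (c : Fin s) :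
    T 1 c = Fin.last (n + 1) ↔ s - f (Fin.last (n + 1)) ≤ c.val := by
  rw [← hT.card_row_one_last]
  exact (hT.monotone 1).apply_eq_iff_le_of_forall_le (fun _ => Fin.le_last _) c

theorem row_zero_ne_castSucc_last (hT : IsTwoRowTableau s f T) {c : Fin s}
    (hc : c.val + f (Fin.last n).castSucc < s) : T 0 c ≠ (Fin.last n).castSucc := by
  intro h
  have hle := ((hT.monotone 0).apply_eq_iff_le_of_forall_le hT.row_zero_le_castSucc_last c).1 h
  have := hT.card_eq (Fin.last n).castSucc
  omega

theorem card_demoteTop_one {k : ℕ} (hT : IsTwoRowTableau s f T) (hk : k ≤ f (Fin.last (n + 1)))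
    (i : Fin (n + 2)) :
    #{c | demoteTop (s - f (Fin.last (n + 1))) k T 1 c = i} +
        (if Fin.last (n + 1) = i then k else 0) =
      #{c | T 1 c = i} + (if (Fin.last n).castSucc = i then k else 0) := by
  set lo := s - f (Fin.last (n + 1))
  have hregion : #{c : Fin s | lo ≤ c.val ∧ c.val < lo + k} = k := by
    rw [Fin.card_filter_le_val_lt (by have := hT.apply_last_le; omega)]
    omega
  have key := card_filter_add_ite_eq (g := T 1) (g' := _root_.demoteTop lo k T 1)
    (R := {c : Fin s | lo ≤ c.val ∧ c.val < lo + k}) (a := Fin.last (n + 1))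
    (b := (Fin.last n).castSucc)
    (fun c hc => (hT.row_one_eq_last_iff c).2 (mem_filter.1 hc).2.1)
    (fun c hc => by rw [demoteTop_one, if_pos (mem_filter.1 hc).2])
    (fun c hc => by rw [demoteTop_one, if_neg fun h => hc (mem_filter.2 ⟨mem_univ c, h⟩)]) i
  rwa [hregion] at key

theorem demoteTop {fA fB : Fin (n + 2) → ℕ} {k : ℕ} (hT : IsTwoRowTableau s fA T)
    (hk : k + fA (Fin.last n).castSucc ≤ fA (Fin.last (n + 1)))
    (hbelow : ∀ i : Fin n, fB i.castSucc.castSucc = fA i.castSucc.castSucc)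
    (hpen : fB (Fin.last n).castSucc = fA (Fin.last n).castSucc + k)
    (htop : fB (Fin.last (n + 1)) + k = fA (Fin.last (n + 1))) :
    IsTwoRowTableau s fB (demoteTop (s - fA (Fin.last (n + 1))) k T) := by
  have hlast := hT.apply_last_le
  have hbefore (c : Fin s) (hc : c.val < s - fA (Fin.last (n + 1))) :
      T 1 c ≤ (Fin.last n).castSucc := by
    rw [Fin.le_castSucc_iff, Fin.succ_last]
    exact (Fin.le_last _).lt_of_ne (by rw [Ne, hT.row_one_eq_last_iff]; omega)
  refine ⟨Fin.forall_fin_two.2 ⟨?_, fun c c' hcc => ?_⟩, fun c => ?_, fun i => ?_⟩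
  · simpa using hT.monotone 0
  · have hcc' : c.val ≤ c'.val := hcc
    rw [demoteTop_one, demoteTop_one]
    split_ifs with h h'
    · exact le_rfl
    · exact ((hT.row_one_eq_last_iff c').2 (by omega)).symm ▸ Fin.le_last _
    · exact hbefore c (by omega)
    · exact hT.monotone 1 hcc
  · rw [demoteTop_zero, demoteTop_one]
    split_ifs with h
    · exact (hT.row_zero_le_castSucc_last c).lt_of_ne (hT.row_zero_ne_castSucc_last (by omega))
    · exact hT.lt c
  · have hrow1 := hT.card_demoteTop_one (by omega : k ≤ _) i
    have hcount := hT.card_eq i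
    rw [demoteTop_zero]
    induction i using Fin.lastCases with
    | last =>
      rw [if_pos rfl, if_neg (Fin.castSucc_lt_last _).ne] at hrow1
      omega
    | cast j =>
      induction j using Fin.lastCases with
      | last =>
        rw [if_neg (Fin.castSucc_lt_last _).ne', if_pos rfl] at hrow1
        omega
      | cast i =>
        rw [if_neg (Fin.castSucc_lt_last _).ne',
          if_neg (Fin.castSucc_lt_castSucc_iff.2 (Fin.castSucc_lt_last i)).ne'] at hrow1
        rw [hbelow]
        omega

end IsTwoRowTableau

theorem eq_of_demoteTop_eq {n s k : ℕ} {f : Fin (n + 2) → ℕ}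
    {T T' : Fin 2 → Fin s → Fin (n + 2)} (hT : IsTwoRowTableau s f T)
    (hT' : IsTwoRowTableau s f T')
    (h : demoteTop (s - f (Fin.last (n + 1))) k T = demoteTop (s - f (Fin.last (n + 1))) k T') :
    T = T' := by
  funext r c
  have hrc := congr_fun (congr_fun h r) c
  by_cases hr : r = 1 ∧ s - f (Fin.last (n + 1)) ≤ c.val ∧ c.val < s - f (Fin.last (n + 1)) + k
  · obtain ⟨rfl, hc, -⟩ := hr
    rw [(hT.row_one_eq_last_iff c).2 hc, (hT'.row_one_eq_last_iff c).2 hc]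
  · simpa only [demoteTop, if_neg hr] using hrc

theorem card_lt_card_of_demoteTop {n s k : ℕ} {fA fB : Fin (n + 2) → ℕ}
    (hk : k + fA (Fin.last n).castSucc ≤ fA (Fin.last (n + 1)))
    (hbelow : ∀ i : Fin n, fB i.castSucc.castSucc = fA i.castSucc.castSucc)
    (hpen : fB (Fin.last n).castSucc = fA (Fin.last n).castSucc + k)
    (htop : fB (Fin.last (n + 1)) + k = fA (Fin.last (n + 1))) (hk0 : 0 < k)
    {W : Fin 2 → Fin s → Fin (n + 2)} (hW : IsTwoRowTableau s fB W) (c : Fin s)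
    (hc : c.val = s - fA (Fin.last (n + 1))) (hWc : W 1 c ≠ (Fin.last n).castSucc) :
    Nat.card {T // IsTwoRowTableau s fA T} < Nat.card {T // IsTwoRowTableau s fB T} := by
  classical
  let demote (T : {T // IsTwoRowTableau s fA T}) : {T // IsTwoRowTableau s fB T} :=
    ⟨demoteTop _ k T.1, T.2.demoteTop hk hbelow hpen htop⟩
  have hinj : Function.Injective demote := fun T T' h =>
    Subtype.ext (eq_of_demoteTop_eq T.2 T'.2 (congr_arg Subtype.val h))
  rw [Nat.card_eq_fintype_card, Nat.card_eq_fintype_card]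
  refine Fintype.card_lt_of_injective_of_notMem demote hinj (b := ⟨W, hW⟩) ?_
  rintro ⟨T, hTW⟩
  have hWc' : demoteTop _ k T.1 1 c = W 1 c :=
    congr_fun (congr_fun (congr_arg Subtype.val hTW) 1) c
  rw [demoteTop_one, if_pos ⟨hc.ge, by omega⟩] at hWc'
  exact hWc hWc'.symm

section RowOfCum

variable {m s : ℕ} {D E : ℕ → ℕ}

/-- The row of length `s` in which `D i` cells carry a letter smaller than `i`. -/
def rowOfCum (m s : ℕ) (D : ℕ → ℕ) (c : Fin s) : Fin (m + 1) :=
  ⟨Nat.findGreatest (fun j => D j ≤ c.val) m, Nat.lt_succ_of_le (Nat.findGreatest_le m)⟩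

theorem le_rowOfCum_iff (hD : Monotone D) (hD0 : D 0 = 0) {i : ℕ} (hi : i ≤ m) (c : Fin s) :
    i ≤ (rowOfCum m s D c).val ↔ D i ≤ c.val :=
  ⟨fun h => (hD h).trans (Nat.findGreatest_spec (P := fun j => D j ≤ c.val) (Nat.zero_le m)
    (by simp [hD0])), fun h => Nat.le_findGreatest hi h⟩

theorem lt_rowOfCum_succ (hDs : s ≤ D (m + 1)) (c : Fin s) :
    c.val < D ((rowOfCum m s D c).val + 1) := by
  by_cases h : (rowOfCum m s D c).val + 1 ≤ m
  · exact lt_of_not_ge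
      (Nat.findGreatest_is_greatest (P := fun j => D j ≤ c.val) (Nat.lt_succ_self _) h)
  · have hlast : (rowOfCum m s D c).val = m := by have := (rowOfCum m s D c).isLt; omega
    rw [hlast]
    exact c.isLt.trans_le hDs

theorem rowOfCum_eq_iff (hD : Monotone D) (hD0 : D 0 = 0) (hDs : s ≤ D (m + 1)) (c : Fin s)
    (i : Fin (m + 1)) : rowOfCum m s D c = i ↔ D i ≤ c.val ∧ c.val < D (i + 1) := by
  have hi := Nat.lt_succ_iff.1 i.isLt
  constructor
  · rintro rfl
    exact ⟨(le_rowOfCum_iff hD hD0 hi c).1 le_rfl, lt_rowOfCum_succ hDs c⟩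
  · rintro ⟨hlo, hhi⟩
    refine Fin.ext (le_antisymm (not_lt.1 fun hlt => ?_) ((le_rowOfCum_iff hD hD0 hi c).2 hlo))
    have hrow := Nat.lt_succ_iff.1 (rowOfCum m s D c).isLt
    exact absurd ((le_rowOfCum_iff hD hD0 (by omega) c).1 hlt) (not_le.2 hhi)

theorem monotone_rowOfCum (hD : Monotone D) (hD0 : D 0 = 0) : Monotone (rowOfCum m s D) :=
  fun c c' hcc =>
    have hrow := Nat.lt_succ_iff.1 (rowOfCum m s D c).isLt
    (le_rowOfCum_iff hD hD0 hrow c').2 (((le_rowOfCum_iff hD hD0 hrow c).1 le_rfl).trans hcc)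

theorem card_rowOfCum_eq (hD : Monotone D) (hD0 : D 0 = 0) (hDs : D (m + 1) = s)
    (i : Fin (m + 1)) : #{c | rowOfCum m s D c = i} = D (i + 1) - D i := by
  simp only [rowOfCum_eq_iff hD hD0 hDs.ge]
  exact Fin.card_filter_le_val_lt (hDs ▸ hD (Nat.succ_le_of_lt i.isLt))

theorem isTwoRowTableau_rowOfCum {f : Fin (m + 1) → ℕ} (hD : Monotone D) (hD0 : D 0 = 0)
    (hDs : D (m + 1) = s) (hE : Monotone E) (hE0 : E 0 = 0) (hEs : E (m + 1) = s)
    (hED : ∀ i ≤ m, E (i + 1) ≤ D i)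
    (hf : ∀ i : Fin (m + 1), D (i + 1) + E (i + 1) = D i + E i + f i) :
    IsTwoRowTableau s f ![rowOfCum m s D, rowOfCum m s E] := by
  refine ⟨Fin.forall_fin_two.2 ⟨monotone_rowOfCum hD hD0, monotone_rowOfCum hE hE0⟩,
    fun c => ?_, fun i => ?_⟩
  · show rowOfCum m s D c < rowOfCum m s E c
    have hj := Nat.lt_succ_iff.1 (rowOfCum m s E c).isLt
    refine lt_of_not_ge fun hle => ?_
    have h1 := (le_rowOfCum_iff hD hD0 hj c).1 hle
    have h2 := lt_rowOfCum_succ hEs.ge c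
    have h3 := hED _ hj
    omega
  · show #{c | rowOfCum m s D c = i} + #{c | rowOfCum m s E c = i} = f i
    rw [card_rowOfCum_eq hD hD0 hDs, card_rowOfCum_eq hE hE0 hEs]
    have := hf i
    have := hD (Nat.le_add_right i.val 1)
    have := hE (Nat.le_add_right i.val 1)
    omega

end RowOfCum

theorem List.sum_take_append_pair {M : Type*} [AddMonoid M] (l : List M) (x y : M) (i : ℕ) :
    ((l ++ [x, y]).take i).sum =
      if i ≤ l.length then (l.take i).sum
      else if i = l.length + 1 then l.sum + x else l.sum + x + y := by
  split_ifs with h1 h2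
  · rw [List.take_append_of_le_length h1]
  · subst h2
    rw [List.take_append, List.take_of_length_le (by omega)]
    simp
  · rw [List.take_of_length_le (by simp; omega)]
    simp [add_assoc]

theorem exists_isTwoRowTableau_row_one_lt {bs : List ℕ} {α β γ s : ℕ}
    (hb : ∀ b ∈ bs, b + γ ≤ s) (hsum : bs.sum + (α + β + γ) = 2 * s) (hβ : 0 < β)
    (hαγ : α < γ) (hβγ : β + γ ≤ s) :
    ∃ W : Fin 2 → Fin s → Fin (bs.length + 2),
      IsTwoRowTableau s (fun i => (bs ++ [γ, β + α])[i.val]'(by simp)) W ∧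
      ∀ c : Fin s, c.val ≤ s - (β + γ) → (W 1 c).val < bs.length := by
  -- `D` and `E` count the cells of the two rows holding a letter below `i`; they add up to `P`.
  set P : ℕ → ℕ := fun i => ((bs ++ [γ, β + α]).take i).sum
  set D : ℕ → ℕ := fun i => if i ≤ bs.length then min (P i) (s - (α + 1)) else s
  set E : ℕ → ℕ := fun i => P i - D i
  have hpartial (i : ℕ) : (bs.take i).sum ≤ (bs.take (i + 1)).sum ∧
      (bs.take i).sum ≤ bs.sum ∧ (bs.length ≤ i → (bs.take i).sum = bs.sum) ∧
      (i < bs.length → (bs.take (i + 1)).sum + γ ≤ (bs.take i).sum + s) := by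
    refine ⟨bs.monotone_sum_take (Nat.le_succ i),
      (List.take_sublist _ _).sum_le_sum fun _ _ => Nat.zero_le _,
      fun hi => by rw [List.take_of_length_le hi], fun hi => ?_⟩
    rw [List.sum_take_succ _ _ hi]
    have := hb _ (List.getElem_mem hi)
    omega
  have hDmono : Monotone D := monotone_nat_of_le_succ fun i => by
    have := hpartial i
    simp only [D, P, List.sum_take_append_pair]; split_ifs <;> omega
  have hEmono : Monotone E := monotone_nat_of_le_succ fun i => by
    have := hpartial i
    simp only [E, D, P, List.sum_take_append_pair]; split_ifs <;> omega
  have hE0 : E 0 = 0 := by simp [E, D, P]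
  have hED (i : ℕ) (hi : i ≤ bs.length + 1) : E (i + 1) ≤ D i := by
    have := hpartial i; have := hpartial (i + 1)
    simp only [E, D, P, List.sum_take_append_pair]; split_ifs <;> omega
  have hDE (i : ℕ) : D i + E i = P i := by
    have := hpartial i
    simp only [E, D, P, List.sum_take_append_pair]; split_ifs <;> omega
  refine ⟨![rowOfCum (bs.length + 1) s D, rowOfCum (bs.length + 1) s E],
    isTwoRowTableau_rowOfCum hDmono (by simp [D, P]) (by simp [D]) hEmono hE0
      (by simp only [E, D, P, List.sum_take_append_pair]; split_ifs <;> omega) hED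
      (fun i => by rw [hDE, hDE]; exact List.sum_take_succ _ _ _), fun c hc => ?_⟩
  refine lt_of_not_ge fun hle => ?_
  have hEc := (le_rowOfCum_iff hEmono hE0 (Nat.le_succ _) c).1 hle
  have := hpartial bs.length
  simp only [E, D, P, List.sum_take_append_pair] at hEc
  split_ifs at hEc <;> omega

theorem kostka_unequal_inequality_general (bs : List ℕ) (α β γ s : ℕ)
    (hpos : ∀ x ∈ bs ++ [α, β, γ], 0 < x)
    (hsum : (bs ++ [α, β, γ]).sum = 2 * s)
    (hreduced : (bs ++ [α, β, γ]).Pairwise (fun x y => x + y ≤ s))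
    (hαγ : α < γ) :
    kostka (bs ++ [α, β + γ]) < kostka (bs ++ [γ, β + α]) := by
  have hβ : 0 < β := hpos β (by simp)
  have hb : ∀ b ∈ bs, b + γ ≤ s := fun _ hb => hreduced.rel_of_mem_append hb (by simp)
  have hβγ : β + γ ≤ s :=
    (List.pairwise_pair (R := fun x y => x + y ≤ s)).1 (List.pairwise_append.1 hreduced).2.1.of_cons
  have hsum' : bs.sum + (α + β + γ) = 2 * s := by simpa [add_assoc] using hsum
  obtain ⟨W, hW, hW1⟩ := exists_isTwoRowTableau_row_one_lt hb hsum' hβ hαγ hβγ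
  rw [kostka_eq_card_s8 (m := bs.length + 2) (s := s) (by simp) (by simp; omega),
    kostka_eq_card_s8 (m := bs.length + 2) (s := s) (by simp) (by simp; omega)]
  refine card_lt_card_of_demoteTop (k := γ - α) ?_ (fun i => by simp) ?_ ?_ (by omega) hW
    ⟨s - (β + γ), by omega⟩ ?_ fun h => by simpa [h] using hW1 ⟨s - (β + γ), by omega⟩ le_rfl
  all_goals simp <;> omega

/-- If `(b₁,…,b_μ, α, β, γ)` is a reduced Schubert problem with
`α ≤ β ≤ γ` and `α < γ`, then
`K(b₁,…,b_μ, α, β + γ) < K(b₁,…,b_μ, γ, β + α)`. -/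
theorem kostka_unequal_inequality (bs : List ℕ) (α β γ s : ℕ)
    (hpos : ∀ x ∈ bs ++ [α, β, γ], 0 < x)
    (hsum : (bs ++ [α, β, γ]).sum = 2 * s)
    (hreduced : (bs ++ [α, β, γ]).Pairwise (fun x y => x + y ≤ s))
    (hαβ : α ≤ β) (hβγ : β ≤ γ) (hαγ : α < γ) :
    kostka (bs ++ [α, β + γ]) < kostka (bs ++ [γ, β + α]) :=
  kostka_unequal_inequality_general bs α β γ s hpos hsum hreduced hαγ
end

section
/- For any positive integers a_1, …, a_m, the Kostka number K(a_1, …, a_m) equals (2/π) · ∫_0^π ( ∏_{i=1}^m sin((a_i + 1)θ)/sin θ ) · sin² θ dθ. -/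
/-!
For `0 ≤ qᵢ ≤ aᵢ` (the number of entries `i` in the second row of a tableau) let
`wt q = ∑ (aᵢ - 2 qᵢ)`, and let `N_w` count the `q` of weight `w`. Expanding each factor as
`sin((a+1)θ)/sin θ = ∑_{t=0}^{a} e^{i(a-2t)θ}` turns the integrand into `∑_q cos(wt q · θ) sin²θ`.
Since `∫₀^π cos(cθ) sin²θ dθ` is `π/2` at `c = 0`, `-π/4` at `c = ±2` and `0` otherwise, and
`N₂ = N₋₂` by `q ↦ a - q`, the right-hand side equals `N₀ - N₋₂`.

A two-row tableau is determined by the contents of its weakly increasing rows, and column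
strictness is a ballot condition on `q`. The crystal lowering operator maps the non-ballot `q` of
weight `0` bijectively onto the `q` of weight `-2`, so `K = N₀ - N₋₂` as well.
-/

open Finset Function

namespace Kostka

section PrefixSum

variable {n : ℕ} {M : Type*}

def prefixSum [AddCommMonoid M] (f : Fin n → M) (k : ℕ) : M :=
  ∑ i ∈ univ.filter (fun i : Fin n => (i : ℕ) < k), f i

@[simp] lemma prefixSum_zero [AddCommMonoid M] (f : Fin n → M) : prefixSum f 0 = 0 := by
  simp [prefixSum]

lemma prefixSum_succ [AddCommMonoid M] (f : Fin n → M) (i : Fin n) :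
    prefixSum f (i + 1) = prefixSum f i + f i := by
  have : univ.filter (fun j : Fin n => (j : ℕ) < i + 1) =
      insert i (univ.filter (fun j : Fin n => (j : ℕ) < i)) := by
    ext j; simp [le_iff_eq_or_lt, Fin.val_inj]
  rw [prefixSum, this, sum_insert (by simp), add_comm, prefixSum]

lemma prefixSum_of_le [AddCommMonoid M] (f : Fin n → M) {k : ℕ} (hk : n ≤ k) :
    prefixSum f k = ∑ i, f i := by
  rw [prefixSum, filter_true_of_mem fun i _ => i.2.trans_le hk]

lemma prefixSum_mono [AddCommMonoid M] [PartialOrder M] [IsOrderedAddMonoid M] {f : Fin n → M}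
    (hf : ∀ i, 0 ≤ f i) : Monotone (prefixSum f) := fun _ _ hkl =>
  sum_le_sum_of_subset_of_nonneg (monotone_filter_right _ fun _ _ h => h.trans_le hkl)
    fun i _ _ => hf i

lemma prefixSum_update [AddCommGroup M] (f : Fin n → M) (b : Fin n) (v : M) (k : ℕ) :
    prefixSum (update f b v) k = prefixSum f k + if (b : ℕ) < k then v - f b else 0 := by
  unfold prefixSum
  split_ifs with hb
  · rw [sum_update_of_mem (by simpa), sdiff_singleton_eq_erase,
      sum_erase_eq_sub (by simpa)]
    abel
  · rw [add_zero]
    exact sum_congr rfl fun i hi => update_of_ne (by rintro rfl; exact hb (by simpa using hi)) _ _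

lemma prefixSum_natCast (v : Fin n → ℕ) (k : ℕ) :
    prefixSum (fun i => (v i : ℤ)) k = prefixSum v k := by
  simp [prefixSum]

end PrefixSum

section Ballot

variable {n : ℕ} (A : Fin n → ℕ)

def box : Finset (Fin n → ℕ) := Fintype.piFinset fun i => range (A i + 1)

variable {A} in
lemma mem_box {q : Fin n → ℕ} : q ∈ box A ↔ ∀ i, q i ≤ A i := by
  simp [box]

def weight (q : Fin n → ℕ) : ℤ := ∑ i, ((A i : ℤ) - 2 * q i)

/-- With `q i` and `A i - q i` the numbers of entries `i` in the second and the first row of a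
two-row tableau, `excess A q k ≤ 0` says that the entries `< k` of the second row fit below the
entries `< k - 1` of the first. -/
def excess (q : Fin n → ℕ) (k : ℕ) : ℤ :=
  prefixSum (fun i => (q i : ℤ)) k - prefixSum (fun i => (A i - q i : ℤ)) (k - 1)

def IsBallot (q : Fin n → ℕ) : Prop := ∀ k ≤ n, excess A q k ≤ 0

instance : DecidablePred (IsBallot A) := fun _ => Nat.decidableBallLE n _

def maxExcess (q : Fin n → ℕ) : ℤ := (range (n + 1)).sup' nonempty_range_add_one (excess A q)

variable (q : Fin n → ℕ)

@[simp] lemma excess_zero : excess A q 0 = 0 := by simp [excess]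

lemma weight_eq : weight A q = ∑ i, (A i : ℤ) - 2 * ∑ i, (q i : ℤ) := by
  rw [weight, sum_sub_distrib, mul_sum]

lemma weight_update (b : Fin n) (v : ℕ) :
    weight A (update q b v) = weight A q - 2 * (v - q b : ℤ) := by
  have h : (fun i => (A i - 2 * update q b v i : ℤ)) =
      update (fun i => (A i - 2 * q i : ℤ)) b (A b - 2 * v) :=
    funext (apply_update (fun j (x : ℕ) => (A j - 2 * x : ℤ)) q b v)
  simp only [weight, ← prefixSum_of_le _ le_rfl, h, prefixSum_update, if_pos b.2]
  ring

lemma excess_update (b : Fin n) (v : ℕ) (k : ℕ) :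
    excess A (update q b v) k = excess A q k +
      (v - q b : ℤ) * ((if (b : ℕ) < k then 1 else 0) + if (b : ℕ) + 1 < k then 1 else 0) := by
  have hq : (fun i => ((update q b v i : ℕ) : ℤ)) = update (fun i => (q i : ℤ)) b v :=
    funext (apply_update (fun _ (x : ℕ) => (x : ℤ)) q b v)
  have hp : (fun i => (A i - update q b v i : ℤ)) = update (fun i => (A i - q i : ℤ)) b (A b - v) :=
    funext (apply_update (fun j (x : ℕ) => (A j - x : ℤ)) q b v)
  simp only [excess, hq, hp, prefixSum_update]
  split_ifs <;> omega

lemma excess_le_maxExcess {k : ℕ} (hk : k ≤ n) : excess A q k ≤ maxExcess A q :=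
  le_sup' (excess A q) (mem_range.2 (Nat.lt_succ_of_le hk))

lemma maxExcess_le {c : ℤ} (h : ∀ k ≤ n, excess A q k ≤ c) : maxExcess A q ≤ c :=
  sup'_le _ _ fun k hk => h k (Nat.lt_succ_iff.1 (mem_range.1 hk))

lemma exists_excess_eq_maxExcess : ∃ k ≤ n, excess A q k = maxExcess A q := by
  obtain ⟨k, hk, h⟩ := exists_mem_eq_sup' nonempty_range_add_one (excess A q)
  exact ⟨k, Nat.lt_succ_iff.1 (mem_range.1 hk), h.symm⟩

lemma isBallot_iff_maxExcess_nonpos : IsBallot A q ↔ maxExcess A q ≤ 0 :=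
  ⟨maxExcess_le A q, fun h _ hk => (excess_le_maxExcess A q hk).trans h⟩

lemma excess_eq_neg_weight_add (b : Fin n) (hb : (b : ℕ) + 1 = n) :
    excess A q n = -weight A q + (A b - q b : ℤ) := by
  have hp := prefixSum_succ (fun i => (A i - q i : ℤ)) b
  rw [hb, prefixSum_of_le _ le_rfl, sum_sub_distrib] at hp
  rw [excess, prefixSum_of_le _ le_rfl, show n - 1 = b by omega, weight_eq]
  linarith

variable {A q} in
lemma neg_weight_le_maxExcess (hq : ∀ i, q i ≤ A i) : -weight A q ≤ maxExcess A q := by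
  rcases Nat.eq_zero_or_pos n with rfl | hn
  · simpa [weight] using excess_le_maxExcess A q le_rfl
  · obtain ⟨b, hb⟩ : ∃ b : Fin n, (b : ℕ) + 1 = n := ⟨⟨n - 1, by omega⟩, by simp; omega⟩
    have := excess_eq_neg_weight_add A q b hb
    have := excess_le_maxExcess A q le_rfl
    have := hq b
    omega

def firstMaxIdx : ℕ := Nat.find (exists_excess_eq_maxExcess A q)

def lastMaxIdx : ℕ := Nat.findGreatest (fun k => excess A q k = maxExcess A q) n

lemma firstMaxIdx_le : firstMaxIdx A q ≤ n := (Nat.find_spec (exists_excess_eq_maxExcess A q)).1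

lemma excess_firstMaxIdx : excess A q (firstMaxIdx A q) = maxExcess A q :=
  (Nat.find_spec (exists_excess_eq_maxExcess A q)).2

lemma excess_lt_of_lt_firstMaxIdx {k : ℕ} (hk : k < firstMaxIdx A q) :
    excess A q k < maxExcess A q :=
  have hkn : k ≤ n := hk.le.trans (firstMaxIdx_le A q)
  (excess_le_maxExcess A q hkn).lt_of_ne fun h => Nat.find_min _ hk ⟨hkn, h⟩

lemma firstMaxIdx_eq {k : ℕ} (hk : k ≤ n) (h : excess A q k = maxExcess A q)
    (hlt : ∀ j < k, excess A q j < maxExcess A q) : firstMaxIdx A q = k :=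
  (Nat.find_eq_iff _).2 ⟨⟨hk, h⟩, fun j hj hj' => (hlt j hj).ne hj'.2⟩

lemma lastMaxIdx_le : lastMaxIdx A q ≤ n := Nat.findGreatest_le n

lemma excess_lastMaxIdx : excess A q (lastMaxIdx A q) = maxExcess A q := by
  obtain ⟨k, hk, h⟩ := exists_excess_eq_maxExcess A q
  exact Nat.findGreatest_spec (P := fun k => excess A q k = maxExcess A q) hk h

lemma excess_lt_of_lastMaxIdx_lt {k : ℕ} (hk : lastMaxIdx A q < k) (hkn : k ≤ n) :
    excess A q k < maxExcess A q :=
  (excess_le_maxExcess A q hkn).lt_of_ne (Nat.findGreatest_is_greatest hk hkn)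

lemma lastMaxIdx_eq {k : ℕ} (hk : k ≤ n) (h : excess A q k = maxExcess A q)
    (hlt : ∀ j, k < j → j ≤ n → excess A q j < maxExcess A q) : lastMaxIdx A q = k :=
  Nat.findGreatest_eq_iff.2 ⟨hk, fun _ => h, fun j hj hjn => (hlt j hj hjn).ne⟩

lemma exists_succ_eq_firstMaxIdx (h : 0 < maxExcess A q) :
    ∃ b : Fin n, (b : ℕ) + 1 = firstMaxIdx A q := by
  have h0 : firstMaxIdx A q ≠ 0 := fun h0 => h.ne (by rw [← excess_firstMaxIdx, h0, excess_zero])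
  exact ⟨⟨firstMaxIdx A q - 1, by have := firstMaxIdx_le A q; omega⟩, by simp; omega⟩

lemma exists_succ_eq_lastMaxIdx (h : 0 < maxExcess A q) :
    ∃ b : Fin n, (b : ℕ) + 1 = lastMaxIdx A q := by
  have h0 : lastMaxIdx A q ≠ 0 := fun h0 => h.ne (by rw [← excess_lastMaxIdx, h0, excess_zero])
  exact ⟨⟨lastMaxIdx A q - 1, by have := lastMaxIdx_le A q; omega⟩, by simp; omega⟩

variable {A q} in
lemma one_le_apply_of_succ_eq_firstMaxIdx (hq : ∀ i, q i ≤ A i) (b : Fin n)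
    (hb : (b : ℕ) + 1 = firstMaxIdx A q) : 1 ≤ q b := by
  by_contra! h0
  have hp := prefixSum_mono (fun i => sub_nonneg.2 (Nat.cast_le.2 (hq i)) :
    ∀ i, (0 : ℤ) ≤ A i - q i) (Nat.sub_le (b : ℕ) 1)
  have hstep := prefixSum_succ (fun i => (q i : ℤ)) b
  have hlt := excess_lt_of_lt_firstMaxIdx A q (k := b) (by omega)
  have hmax := excess_firstMaxIdx A q
  rw [← hb] at hmax
  simp only [excess, Nat.add_sub_cancel] at hmax hlt
  omega

variable {A q} in
lemma apply_lt_of_succ_eq_lastMaxIdx (hq : ∀ i, q i ≤ A i) (h : 0 < weight A q + maxExcess A q)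
    (b : Fin n) (hb : (b : ℕ) + 1 = lastMaxIdx A q) : q b < A b := by
  by_contra! h0
  have hpb : (A b - q b : ℤ) = 0 := by have := hq b; omega
  have hmax := excess_lastMaxIdx A q
  rcases (lastMaxIdx_le A q).lt_or_eq with hlt | heq
  · have hp := prefixSum_succ (fun i => (A i - q i : ℤ)) b
    have hq' := prefixSum_mono (fun i => Nat.cast_nonneg (α := ℤ) (q i))
      (show (b : ℕ) + 1 ≤ b + 2 by omega)
    have hlt := excess_lt_of_lastMaxIdx_lt A q (k := b + 2) (by omega) (by omega)
    rw [← hb] at hmax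
    simp only [excess, Nat.add_sub_cancel, show (b : ℕ) + 2 - 1 = b + 1 by omega] at hmax hlt
    omega
  · have := excess_eq_neg_weight_add A q b (hb.trans heq)
    rw [heq] at hmax
    omega

lemma maxExcess_update_succ (b : Fin n) (hb : (b : ℕ) + 1 = lastMaxIdx A q) :
    maxExcess A (update q b (q b + 1)) = maxExcess A q + 1 ∧
      firstMaxIdx A (update q b (q b + 1)) = lastMaxIdx A q := by
  set q' := update q b (q b + 1)
  have hS (k : ℕ) : excess A q' k =
      excess A q k + ((if (b : ℕ) < k then 1 else 0) + if (b : ℕ) + 1 < k then 1 else 0) := by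
    rw [excess_update]; push_cast; ring
  have hlast := lastMaxIdx_le A q
  have hat : excess A q' (lastMaxIdx A q) = maxExcess A q + 1 := by
    rw [hS, excess_lastMaxIdx, if_pos (by omega), if_neg (by omega)]; ring
  have hmax : maxExcess A q' = maxExcess A q + 1 := by
    refine le_antisymm (maxExcess_le A q' fun k hk => ?_) (hat ▸ excess_le_maxExcess A q' hlast)
    rw [hS]
    rcases lt_or_ge (lastMaxIdx A q) k with h | h
    · have := excess_lt_of_lastMaxIdx_lt A q h hk
      split_ifs <;> omega
    · have := excess_le_maxExcess A q hk
      split_ifs <;> omega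
  refine ⟨hmax, firstMaxIdx_eq A q' hlast (by rw [hat, hmax]) fun j hj => ?_⟩
  rw [hS, hmax, if_neg (by omega), if_neg (by omega)]
  have := excess_le_maxExcess A q (hj.le.trans hlast)
  omega

lemma maxExcess_update_pred (b : Fin n) (hb : (b : ℕ) + 1 = firstMaxIdx A q) (hqb : 1 ≤ q b) :
    maxExcess A (update q b (q b - 1)) = maxExcess A q - 1 ∧
      lastMaxIdx A (update q b (q b - 1)) = firstMaxIdx A q := by
  set q' := update q b (q b - 1)
  have hS (k : ℕ) : excess A q' k =
      excess A q k - ((if (b : ℕ) < k then 1 else 0) + if (b : ℕ) + 1 < k then 1 else 0) := by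
    rw [excess_update, Nat.cast_sub hqb]; ring
  have hfirst := firstMaxIdx_le A q
  have hat : excess A q' (firstMaxIdx A q) = maxExcess A q - 1 := by
    rw [hS, excess_firstMaxIdx, if_pos (by omega), if_neg (by omega)]; ring
  have hmax : maxExcess A q' = maxExcess A q - 1 := by
    refine le_antisymm (maxExcess_le A q' fun k hk => ?_) (hat ▸ excess_le_maxExcess A q' hfirst)
    rw [hS]
    rcases lt_or_ge k (firstMaxIdx A q) with h | h
    · have := excess_lt_of_lt_firstMaxIdx A q h
      split_ifs <;> omega
    · have := excess_le_maxExcess A q hk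
      split_ifs <;> omega
  refine ⟨hmax, lastMaxIdx_eq A q' hfirst (by rw [hat, hmax]) fun j hj hjn => ?_⟩
  rw [hS, hmax, if_pos (by omega), if_pos (by omega)]
  have := excess_le_maxExcess A q hjn
  omega

/-- The crystal operators `f` (`lower`) and `e` (`raise`) of the signature rule, on row contents. -/
def lower : Fin n → ℕ :=
  if h : 0 < lastMaxIdx A q then
    let b : Fin n := ⟨lastMaxIdx A q - 1, by have := lastMaxIdx_le A q; omega⟩
    update q b (q b + 1)
  else q

def raise : Fin n → ℕ :=
  if h : 0 < firstMaxIdx A q then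
    let b : Fin n := ⟨firstMaxIdx A q - 1, by have := firstMaxIdx_le A q; omega⟩
    update q b (q b - 1)
  else q

lemma lower_eq (b : Fin n) (hb : (b : ℕ) + 1 = lastMaxIdx A q) :
    lower A q = update q b (q b + 1) := by
  have hb' : (⟨lastMaxIdx A q - 1, by have := lastMaxIdx_le A q; omega⟩ : Fin n) = b :=
    Fin.ext (by simp; omega)
  simp only [lower, dif_pos (show 0 < lastMaxIdx A q by omega), hb']

lemma raise_eq (b : Fin n) (hb : (b : ℕ) + 1 = firstMaxIdx A q) :
    raise A q = update q b (q b - 1) := by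
  have hb' : (⟨firstMaxIdx A q - 1, by have := firstMaxIdx_le A q; omega⟩ : Fin n) = b :=
    Fin.ext (by simp; omega)
  simp only [raise, dif_pos (show 0 < firstMaxIdx A q by omega), hb']

end Ballot

section Crystal

variable {n : ℕ} (A : Fin n → ℕ)

theorem card_weight_zero_not_isBallot :
    #{q ∈ box A | weight A q = 0 ∧ ¬IsBallot A q} = #{q ∈ box A | weight A q = -2} := by
  refine card_bij' (fun q _ => lower A q) (fun q _ => raise A q) ?_ ?_ ?_ ?_ <;>
    intro q hq <;>
    simp only [mem_filter, mem_box, isBallot_iff_maxExcess_nonpos, not_le] at hq ⊢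
  · obtain ⟨hq, hw, hM⟩ := hq
    obtain ⟨b, hb⟩ := exists_succ_eq_lastMaxIdx A q hM
    have hlt := apply_lt_of_succ_eq_lastMaxIdx hq (by omega) b hb
    rw [lower_eq A q b hb, weight_update, hw, forall_update_iff q fun i v => v ≤ A i]
    exact ⟨⟨hlt, fun i _ => hq i⟩, by push_cast; ring⟩
  · obtain ⟨hq, hw⟩ := hq
    have hM := neg_weight_le_maxExcess hq
    obtain ⟨b, hb⟩ := exists_succ_eq_firstMaxIdx A q (by omega)
    have hqb := one_le_apply_of_succ_eq_firstMaxIdx hq b hb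
    rw [raise_eq A q b hb, weight_update, hw, forall_update_iff q fun i v => v ≤ A i,
      (maxExcess_update_pred A q b hb hqb).1]
    exact ⟨⟨(Nat.sub_le _ _).trans (hq b), fun i _ => hq i⟩, by push_cast [hqb]; ring, by omega⟩
  · obtain ⟨-, -, hM⟩ := hq
    obtain ⟨b, hb⟩ := exists_succ_eq_lastMaxIdx A q hM
    rw [lower_eq A q b hb, raise_eq _ _ b ((maxExcess_update_succ A q b hb).2 ▸ hb)]
    simp
  · obtain ⟨hq, hw⟩ := hq
    have hM := neg_weight_le_maxExcess hq
    obtain ⟨b, hb⟩ := exists_succ_eq_firstMaxIdx A q (by omega)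
    have hqb := one_le_apply_of_succ_eq_firstMaxIdx hq b hb
    rw [raise_eq A q b hb, lower_eq _ _ b ((maxExcess_update_pred A q b hb hqb).2 ▸ hb)]
    simp [Nat.sub_add_cancel hqb]

theorem card_isBallot_add_card_weight_neg_two :
    #{q ∈ box A | weight A q = 0 ∧ IsBallot A q} + #{q ∈ box A | weight A q = -2} =
      #{q ∈ box A | weight A q = 0} := by
  rw [← card_weight_zero_not_isBallot, ← card_filter_add_card_filter_not (IsBallot A)
    (s := {q ∈ box A | weight A q = 0}), filter_filter, filter_filter]

end Crystal

section Tableau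

variable {n s : ℕ}

lemma isBallot_iff_prefixSum_le {A q : Fin n → ℕ} (hq : ∀ i, q i ≤ A i) :
    IsBallot A q ↔ ∀ k ≤ n, prefixSum q k ≤ prefixSum (fun i => A i - q i) (k - 1) := by
  have hp : (fun i => (A i - q i : ℤ)) = fun i => ((A i - q i : ℕ) : ℤ) :=
    funext fun i => (Nat.cast_sub (hq i)).symm
  simp only [IsBallot, excess, hp, prefixSum_natCast, sub_nonpos, Nat.cast_le]

def content (f : Fin s → Fin n) (i : Fin n) : ℕ := #{c | f c = i}

lemma sum_content (f : Fin s → Fin n) : ∑ i, content f i = s := by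
  simpa [content] using (card_eq_sum_card_fiberwise fun c (_ : c ∈ univ) => mem_univ (f c)).symm

lemma card_val_lt_eq_prefixSum_content (f : Fin s → Fin n) (k : ℕ) :
    #{c | (f c : ℕ) < k} = prefixSum (content f) k := by
  rw [prefixSum, card_eq_sum_card_fiberwise (f := f) (t := univ.filter fun i : Fin n => (i : ℕ) < k)
    fun c hc => by simpa using hc]
  refine sum_congr rfl fun i hi => ?_
  rw [filter_filter, content]
  refine congrArg card (filter_congr fun c _ => ?_)
  simp only [mem_filter, mem_univ, true_and] at hi
  exact ⟨fun h => h.2, fun h => ⟨h ▸ hi, h⟩⟩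

lemma _root_.Monotone.val_lt_iff_lt_prefixSum_content {f : Fin s → Fin n} (hf : Monotone f)
    (c : Fin s) (k : ℕ) : (f c : ℕ) < k ↔ (c : ℕ) < prefixSum (content f) k := by
  rw [← card_val_lt_eq_prefixSum_content]
  constructor
  · intro h
    calc (c : ℕ) < #(Iic c) := by simp
      _ ≤ _ := card_le_card fun c' hc' => by
        simp only [mem_Iic] at hc'
        simpa using (Fin.le_def.1 (hf hc')).trans_lt h
  · intro h
    by_contra! hk
    have : #{c' | (f c' : ℕ) < k} ≤ #(Iio c) := card_le_card fun c' hc' => by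
      simp only [mem_filter, mem_univ, true_and] at hc'
      by_contra hcc
      exact (hk.trans (Fin.le_def.1 (hf (not_lt.1 (by simpa using hcc))))).not_gt hc'
    simp only [Fin.card_Iio] at this
    omega

lemma eq_of_content_eq {f g : Fin s → Fin n} (hf : Monotone f) (hg : Monotone g)
    (h : content f = content g) : f = g := by
  funext c
  have h1 := hf.val_lt_iff_lt_prefixSum_content c (g c + 1)
  have h2 := hg.val_lt_iff_lt_prefixSum_content c (g c + 1)
  have h3 := hf.val_lt_iff_lt_prefixSum_content c (f c + 1)
  have h4 := hg.val_lt_iff_lt_prefixSum_content c (f c + 1)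
  rw [h] at h1 h3
  exact Fin.ext (by omega)

lemma exists_lt_prefixSum_succ {v : Fin n → ℕ} (hv : ∑ i, v i = s) (c : Fin s) :
    ∃ k, (c : ℕ) < prefixSum v (k + 1) :=
  ⟨n, by rw [prefixSum_of_le v n.le_succ, hv]; exact c.2⟩

section OfContent

variable (v : Fin n → ℕ) (hv : ∑ i, v i = s)

def monotoneOfContent (c : Fin s) : Fin n :=
  ⟨Nat.find (exists_lt_prefixSum_succ hv c), by
    have hn : 0 < n := Nat.pos_of_ne_zero <| by
      rintro rfl
      simp only [univ_eq_empty, sum_empty] at hv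
      exact (hv ▸ c).elim0
    refine (Nat.find_lt_iff _ n).2 ⟨n - 1, by omega, ?_⟩
    rw [Nat.sub_add_cancel hn, prefixSum_of_le v le_rfl, hv]
    exact c.2⟩

lemma val_monotoneOfContent_lt_iff (c : Fin s) (k : ℕ) :
    (monotoneOfContent v hv c : ℕ) < k ↔ (c : ℕ) < prefixSum v k := by
  refine (Nat.find_lt_iff _ k).trans ⟨fun ⟨j, hj, hc⟩ => ?_, fun h => ?_⟩
  · exact hc.trans_le (prefixSum_mono (fun _ => Nat.zero_le _) hj)
  · obtain ⟨j, rfl⟩ : ∃ j, k = j + 1 :=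
      Nat.exists_eq_add_one.2 (Nat.pos_of_ne_zero (by rintro rfl; simp at h))
    exact ⟨j, lt_add_one j, h⟩

lemma monotone_monotoneOfContent : Monotone (monotoneOfContent v hv) := fun c c' hcc => by
  rw [Fin.le_def, ← Nat.lt_succ_iff, val_monotoneOfContent_lt_iff]
  exact lt_of_le_of_lt hcc ((val_monotoneOfContent_lt_iff v hv c' _).1 (lt_add_one _))

lemma content_monotoneOfContent : content (monotoneOfContent v hv) = v := by
  have hpre (k : ℕ) : prefixSum (content (monotoneOfContent v hv)) k = prefixSum v k := by
    rw [← card_val_lt_eq_prefixSum_content]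
    simp_rw [val_monotoneOfContent_lt_iff]
    rw [Fin.card_filter_val_lt, min_eq_right (hv ▸ sum_le_sum_of_subset (filter_subset _ _))]
  funext i
  have h := prefixSum_succ (content (monotoneOfContent v hv)) i
  rw [hpre, hpre, prefixSum_succ] at h
  omega

end OfContent

lemma forall_lt_iff_prefixSum_content_le {f g : Fin s → Fin n} (hf : Monotone f) (hg : Monotone g) :
    (∀ c, f c < g c) ↔ ∀ k ≤ n, prefixSum (content g) k ≤ prefixSum (content f) (k - 1) := by
  refine ⟨fun h k _ => ?_, fun h c => ?_⟩
  · simp only [← card_val_lt_eq_prefixSum_content]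
    exact card_le_card fun c hc => by
      simp only [mem_filter, mem_univ, true_and] at hc ⊢
      have := Fin.lt_def.1 (h c)
      omega
  · have hc := (hg.val_lt_iff_lt_prefixSum_content c (g c + 1)).1 (lt_add_one _)
    have hle := h (g c + 1) (g c).2
    rw [Nat.add_sub_cancel] at hle
    exact Fin.lt_def.2 ((hf.val_lt_iff_lt_prefixSum_content c (g c)).2 (hc.trans_le hle))

lemma card_eq_content_add_content (T : Fin 2 → Fin s → Fin n) (i : Fin n) :
    Nat.card {p : Fin 2 × Fin s // T p.1 p.2 = i} = content (T 0) i + content (T 1) i := by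
  rw [Nat.card_eq_fintype_card, Fintype.card_subtype, card_filter, Fintype.sum_prod_type,
    Fin.sum_univ_two]
  simp only [content, card_filter]

end Tableau

section TableauCount

variable {n s : ℕ} (A : Fin n → ℕ)

def IsTableau (T : Fin 2 → Fin s → Fin n) : Prop :=
  (∀ r, Monotone (T r)) ∧ (∀ c, T 0 c < T 1 c) ∧
    ∀ i, Nat.card {p : Fin 2 × Fin s // T p.1 p.2 = i} = A i

variable {A}

lemma IsTableau.content_zero {T : Fin 2 → Fin s → Fin n} (hT : IsTableau A T) :
    content (T 0) = fun i => A i - content (T 1) i :=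
  funext fun i => by have := card_eq_content_add_content T i; rw [hT.2.2] at this; omega

lemma IsTableau.content_one_mem {T : Fin 2 → Fin s → Fin n} (hT : IsTableau A T)
    (hA : ∑ i, A i = 2 * s) : content (T 1) ∈ {q ∈ box A | weight A q = 0 ∧ IsBallot A q} := by
  have hq (i : Fin n) : content (T 1) i ≤ A i := by
    have := card_eq_content_add_content T i; rw [hT.2.2] at this; omega
  simp only [mem_filter, mem_box, isBallot_iff_prefixSum_le hq, weight_eq]
  refine ⟨hq, ?_, ?_⟩
  · rw [← Nat.cast_sum, ← Nat.cast_sum, sum_content, hA]; push_cast; ring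
  · rw [← hT.content_zero]
    exact (forall_lt_iff_prefixSum_content_le (hT.1 0) (hT.1 1)).1 hT.2.1

lemma IsTableau.eq_of_content_one_eq {T T' : Fin 2 → Fin s → Fin n} (hT : IsTableau A T)
    (hT' : IsTableau A T') (h : content (T 1) = content (T' 1)) : T = T' := by
  have h0 : content (T 0) = content (T' 0) := by rw [hT.content_zero, hT'.content_zero, h]
  funext r
  fin_cases r
  exacts [eq_of_content_eq (hT.1 0) (hT'.1 0) h0, eq_of_content_eq (hT.1 1) (hT'.1 1) h]

lemma exists_isTableau_content_one_eq (hA : ∑ i, A i = 2 * s) {q : Fin n → ℕ}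
    (hq : q ∈ {q ∈ box A | weight A q = 0 ∧ IsBallot A q}) :
    ∃ T : Fin 2 → Fin s → Fin n, IsTableau A T ∧ content (T 1) = q := by
  simp only [mem_filter, mem_box, weight_eq] at hq
  obtain ⟨hqA, hw, hball⟩ := hq
  have hsq : ∑ i, q i = s := by
    rw [← Nat.cast_sum, ← Nat.cast_sum, hA] at hw; omega
  have hsp : ∑ i, (A i - q i) = s := by
    rw [sum_tsub_distrib _ fun i _ => hqA i, hA, hsq]; omega
  set f := monotoneOfContent _ hsp
  set g := monotoneOfContent _ hsq
  have hf : content f = fun i => A i - q i := content_monotoneOfContent _ hsp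
  have hg : content g = q := content_monotoneOfContent _ hsq
  have hfm : Monotone f := monotone_monotoneOfContent _ hsp
  have hgm : Monotone g := monotone_monotoneOfContent _ hsq
  refine ⟨![f, g], ⟨Fin.forall_fin_two.2 ⟨hfm, hgm⟩, ?_, fun i => ?_⟩, hg⟩
  · show ∀ c, f c < g c
    rwa [forall_lt_iff_prefixSum_content_le hfm hgm, hf, hg, ← isBallot_iff_prefixSum_le hqA]
  · rw [card_eq_content_add_content]
    simp only [Matrix.cons_val_zero, Matrix.cons_val_one, hf, hg]
    have := hqA i
    omega

theorem card_isTableau (hA : ∑ i, A i = 2 * s) :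
    Nat.card {T : Fin 2 → Fin s → Fin n // IsTableau A T} =
      #{q ∈ box A | weight A q = 0 ∧ IsBallot A q} := by
  rw [← Nat.card_eq_finsetCard]
  refine Nat.card_congr (Equiv.ofBijective (fun T => ⟨content (T.1 1), T.2.content_one_mem hA⟩)
    ⟨fun T T' h => Subtype.ext (T.2.eq_of_content_one_eq T'.2 (congrArg Subtype.val h)), ?_⟩)
  rintro ⟨q, hq⟩
  obtain ⟨T, hT, rfl⟩ := exists_isTableau_content_one_eq hA hq
  exact ⟨⟨T, hT⟩, rfl⟩

theorem kostka_eq_card_isBallot (a : List ℕ) :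
    kostka a = #{q ∈ box a.get | weight a.get q = 0 ∧ IsBallot a.get q} := by
  have hsum : ∑ i, a.get i = a.sum := by simp [Fin.sum_univ_getElem]
  rw [kostka]
  split_ifs with h
  · exact card_isTableau (by omega)
  · refine (card_eq_zero.2 (filter_eq_empty_iff.2 fun q _ hq => ?_)).symm
    have := hq.1
    rw [weight_eq, ← Nat.cast_sum, hsum] at this
    omega

end TableauCount

section Symmetry

variable {n : ℕ} (A : Fin n → ℕ)

lemma weight_sub {q : Fin n → ℕ} (hq : ∀ i, q i ≤ A i) :
    weight A (fun i => A i - q i) = -weight A q := by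
  rw [weight, weight, ← sum_neg_distrib]
  exact sum_congr rfl fun i _ => by have := hq i; omega

theorem card_weight_neg (c : ℤ) :
    #{q ∈ box A | weight A q = -c} = #{q ∈ box A | weight A q = c} := by
  refine card_bij' (fun q _ i => A i - q i) (fun q _ i => A i - q i) ?_ ?_ ?_ ?_ <;>
    intro q hq <;> simp only [mem_filter, mem_box] at hq ⊢
  · exact ⟨fun i => Nat.sub_le _ _, by rw [weight_sub A hq.1, hq.2, neg_neg]⟩
  · exact ⟨fun i => Nat.sub_le _ _, by rw [weight_sub A hq.1, hq.2]⟩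
  all_goals funext i; have := hq.1 i; omega

end Symmetry

section Integral

open Complex in
lemma sin_mul_sum_exp (m : ℕ) (z : ℂ) :
    sin z * ∑ t ∈ range (m + 1), exp ((m - 2 * t) * z * I) = sin ((m + 1) * z) := by
  induction m with
  | zero => simp
  | succ m ih =>
    have hshift (t : ℕ) : exp ((((m + 1 : ℕ) : ℂ) - 2 * ((t + 1 : ℕ) : ℂ)) * z * I) =
        exp (-z * I) * exp ((m - 2 * t) * z * I) := by
      rw [← exp_add]; congr 1; push_cast; ring
    rw [sum_range_succ', mul_add]
    simp_rw [hshift, ← mul_sum, mul_left_comm (sin z), ih, exp_mul_I,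
      show ((m + 1 : ℕ) + 1 : ℂ) * z = z + (m + 1) * z by push_cast; ring, sin_add]
    push_cast
    rw [cos_neg, sin_neg, mul_zero, sub_zero]
    ring

open Real

variable {n : ℕ} (A : Fin n → ℕ)

lemma prod_sin_div_sin {θ : ℝ} (hθ : sin θ ≠ 0) :
    ∏ i, sin ((A i + 1) * θ) / sin θ = ∑ q ∈ box A, cos (weight A q * θ) := by
  have hθ' : Complex.sin θ ≠ 0 := by exact_mod_cast hθ
  have hC : ((∏ i, sin ((A i + 1) * θ) / sin θ : ℝ) : ℂ) =
      ∑ q ∈ box A, Complex.exp ((weight A q * θ : ℝ) * Complex.I) := by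
    push_cast
    simp_rw [← sin_mul_sum_exp _ (θ : ℂ), mul_div_cancel_left₀ _ hθ', prod_univ_sum,
      ← Complex.exp_sum]
    refine sum_congr rfl fun q _ => congrArg Complex.exp ?_
    push_cast [weight, sum_mul]
    rfl
  have hre := congrArg Complex.re hC
  rw [Complex.ofReal_re, Complex.re_sum] at hre
  simpa only [Complex.exp_ofReal_mul_I_re] using hre

lemma integral_cos_int_mul (c : ℤ) :
    ∫ θ in (0 : ℝ)..π, cos (c * θ) = if c = 0 then π else 0 := by
  split_ifs with h
  · simp [h]
  · rw [intervalIntegral.integral_comp_mul_left (fun x => cos x) (Int.cast_ne_zero.2 h),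
      integral_cos, mul_zero, sin_int_mul_pi, sin_zero, sub_zero, smul_zero]

lemma integral_cos_int_mul_mul_sin_sq (c : ℤ) :
    ∫ θ in (0 : ℝ)..π, cos (c * θ) * sin θ ^ 2 =
      (if c = 0 then π / 2 else 0) - (if c = 2 then π / 4 else 0) -
        if c = -2 then π / 4 else 0 := by
  have hsum (θ : ℝ) : cos (c * θ) * sin θ ^ 2 =
      cos (c * θ) / 2 - cos ((c + 2 : ℤ) * θ) / 4 - cos ((c - 2 : ℤ) * θ) / 4 := by
    push_cast
    rw [add_mul, sub_mul, cos_add, cos_sub, sin_sq_eq_half_sub]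
    ring
  have hint (d : ℤ) (r : ℝ) :
      IntervalIntegrable (fun θ => cos (d * θ) / r) MeasureTheory.volume 0 π :=
    (by fun_prop : Continuous fun θ => cos (d * θ) / r).intervalIntegrable _ _
  simp_rw [hsum]
  rw [intervalIntegral.integral_sub ((hint _ _).sub (hint _ _)) (hint _ _),
    intervalIntegral.integral_sub (hint _ _) (hint _ _), intervalIntegral.integral_div,
    intervalIntegral.integral_div, intervalIntegral.integral_div, integral_cos_int_mul,
    integral_cos_int_mul, integral_cos_int_mul]
  split_ifs <;> first | omega | ring

lemma integral_prod_sin_div_sin_mul_sin_sq :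
    ∫ θ in (0 : ℝ)..π, (∏ i, sin ((A i + 1) * θ) / sin θ) * sin θ ^ 2 =
      π / 2 * #{q ∈ box A | weight A q = 0} - π / 4 * #{q ∈ box A | weight A q = 2} -
        π / 4 * #{q ∈ box A | weight A q = -2} := by
  have hcongr : Set.EqOn (fun θ => (∏ i, sin ((A i + 1) * θ) / sin θ) * sin θ ^ 2)
      (fun θ => ∑ q ∈ box A, cos (weight A q * θ) * sin θ ^ 2) (Set.Ioo 0 π) := fun θ hθ => by
    simp only [prod_sin_div_sin A (sin_pos_of_pos_of_lt_pi hθ.1 hθ.2).ne', sum_mul]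
  rw [intervalIntegral.integral_congr_Ioo_of_le pi_pos.le hcongr,
    intervalIntegral.integral_finsetSum fun q _ =>
      (by fun_prop : Continuous fun θ => cos (weight A q * θ) * sin θ ^ 2).intervalIntegrable _ _]
  simp_rw [integral_cos_int_mul_mul_sin_sq, sum_sub_distrib, ← sum_filter, sum_const, nsmul_eq_mul]
  ring

end Integral

end Kostka

open Kostka Finset in
open Real in
theorem kostka_integral_formula_general (a : List ℕ) :
    (kostka a : ℝ) =
      (2 / π) * ∫ θ in (0:ℝ)..π,
        (a.map (fun n => sin (((n : ℝ) + 1) * θ) / sin θ)).prod * (sin θ) ^ 2 := by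
  have hprod (θ : ℝ) : (a.map fun n => sin ((n + 1) * θ) / sin θ).prod =
      ∏ i, sin ((a.get i + 1) * θ) / sin θ := by
    -- the cast `(n : ℝ)` makes Lean coerce `a` itself to a `List ℝ` through the list monad
    simp only [List.pure_def, List.bind_eq_flatMap, ← List.map_eq_flatMap, List.map_map]
    rw [← Fin.prod_univ_fun_getElem]
    rfl
  have hcount := card_isBallot_add_card_weight_neg_two a.get
  have hsymm := card_weight_neg a.get 2
  simp_rw [hprod, integral_prod_sin_div_sin_mul_sin_sq, kostka_eq_card_isBallot, ← hcount, ← hsymm]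
  field_simp
  push_cast
  ring

open Real in
/-- **Integral formula for Kostka numbers.**  For positive integers `a₁,…,aₘ`,
`K(a₁,…,aₘ) = (2/π) ∫₀^π (∏ᵢ sin((aᵢ+1)θ)/sin θ) · sin²θ dθ`. -/
theorem kostka_integral_formula (a : List ℕ) (ha : ∀ x ∈ a, 0 < x) :
    (kostka a : ℝ) =
      (2 / π) * ∫ θ in (0:ℝ)..π,
        (a.map (fun n => sin (((n : ℝ) + 1) * θ) / sin θ)).prod * (sin θ) ^ 2 :=
  kostka_integral_formula_general a
end

section
/- For every integer μ ≥ 14, the integral ∫_0^{π/2} (sin(3θ)/sin θ)^μ · ( sin(5θ)·sin θ − sin²(2θ) ) dθ is strictly positive. -/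
/-!
With `c = cos 2θ` one has `sin 3θ / sin θ = 1 + 2c` and
`sin 5θ sin θ - sin² 2θ = (1 - c)(2c² - 3/2)`, so after `x = 2θ` the integral is half of
`I μ = ∫₀^π P_μ(cos x) dx` with `P_μ(c) = (1 + 2c)^μ (1 - c)(2c² - 3/2)`. Since
`(1 + 2c)² - 2(1 + 2c) - 2 = 2(2c² - 3/2)`, the difference `P_{μ+2} - 2P_{μ+1} - 2P_μ` equals
`(1 + 2c)^μ (1 - c)(4c² - 3)² / 2`, which is `≥ -4` on `[-1, 1]` (it can only be negative where
`|1 + 2c| ≤ 1`). Hence `I (μ+2) ≥ 2 I (μ+1) + 2 I μ - 4π`, so `I μ ≥ 2π` propagates from the two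
values `I 14 = 207π/2` and `I 15 = 2424π`, computed exactly from the moments `∫₀^π cos^n`.
-/

open Real intervalIntegral Finset

def cosPowMean : ℕ → ℚ
  | 0 => 1
  | 1 => 0
  | n + 2 => (n + 1) / (n + 2) * cosPowMean n

theorem integral_cos_pow_eq_pi_mul_cosPowMean :
    ∀ n : ℕ, ∫ x in (0:ℝ)..π, cos x ^ n = π * cosPowMean n
  | 0 => by simp [cosPowMean]
  | 1 => by simp [cosPowMean]
  | n + 2 => by
    rw [integral_cos_pow, integral_cos_pow_eq_pi_mul_cosPowMean n]
    simp only [sin_zero, sin_pi, mul_zero, sub_self, zero_div, zero_add, cosPowMean]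
    push_cast
    ring

theorem integral_sum_mul_cos_pow {ι : Type*} (s : Finset ι) (a : ι → ℝ) (n : ι → ℕ) :
    ∫ x in (0:ℝ)..π, ∑ i ∈ s, a i * cos x ^ n i = π * ∑ i ∈ s, a i * cosPowMean (n i) := by
  have hint (i : ι) : IntervalIntegrable (fun x => a i * cos x ^ n i) MeasureTheory.volume 0 π :=
    (by fun_prop : Continuous fun x => a i * cos x ^ n i).intervalIntegrable _ _
  rw [integral_finsetSum fun i _ => hint i, mul_sum]
  refine sum_congr rfl fun i _ => ?_
  rw [integral_const_mul, integral_cos_pow_eq_pi_mul_cosPowMean]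
  ring

theorem integral_comp_cos_two_mul (g : ℝ → ℝ) :
    ∫ θ in (0:ℝ)..(π / 2), g (cos (2 * θ)) = (∫ x in (0:ℝ)..π, g (cos x)) / 2 := by
  rw [integral_comp_mul_left (fun x => g (cos x)) two_ne_zero, mul_zero,
    mul_div_cancel₀ _ two_ne_zero, smul_eq_mul, inv_mul_eq_div]

noncomputable def integrandPoly (μ : ℕ) (c : ℝ) : ℝ :=
  (1 + 2 * c) ^ μ * ((1 - c) * (2 * c ^ 2 - 3 / 2))

theorem integrand_eq_integrandPoly (μ : ℕ) (θ : ℝ) :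
    (sin (3 * θ) / sin θ) ^ μ * (sin (5 * θ) * sin θ - sin (2 * θ) ^ 2) =
      integrandPoly μ (cos (2 * θ)) := by
  have h5 : sin (5 * θ) * sin θ - sin (2 * θ) ^ 2 =
      (1 - cos (2 * θ)) * (2 * cos (2 * θ) ^ 2 - 3 / 2) := by
    rw [show 5 * θ = 2 * θ + (2 * θ + θ) by ring, sin_add, sin_add, cos_add, sin_two_mul,
      cos_two_mul]
    linear_combination
      (1 - 16 * cos θ ^ 2 + 16 * cos θ ^ 4 - 4 * sin θ ^ 2 * cos θ ^ 2) * sin_sq_add_cos_sq θ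
  rw [h5, integrandPoly]
  -- where `sin θ = 0` the junk quotient `0 / 0` is harmless: `cos 2θ = 1` kills both sides
  by_cases hs : sin θ = 0
  · have hc : cos (2 * θ) = 1 := by rw [cos_two_mul', cos_sq', hs]; ring
    simp [hc]
  · have h3 : sin (3 * θ) / sin θ = 1 + 2 * cos (2 * θ) := by
      rw [div_eq_iff hs, sin_three_mul, cos_two_mul]
      linear_combination (-4 * sin θ) * sin_sq_add_cos_sq θ
    rw [h3]

theorem integrandPoly_add_two (μ : ℕ) (c : ℝ) :
    integrandPoly (μ + 2) c = 2 * integrandPoly (μ + 1) c + 2 * integrandPoly μ c +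
      (1 + 2 * c) ^ μ * ((1 - c) * (4 * c ^ 2 - 3) ^ 2 / 2) := by
  simp only [integrandPoly]
  ring

theorem neg_four_le_integrandPoly_add_two_sub {c : ℝ} (hc : c ∈ Set.Icc (-1) 1) (μ : ℕ) :
    -4 ≤ integrandPoly (μ + 2) c - (2 * integrandPoly (μ + 1) c + 2 * integrandPoly μ c) := by
  obtain ⟨hc₁, hc₂⟩ := hc
  rw [integrandPoly_add_two, add_sub_cancel_left]
  have hq : 0 ≤ (1 - c) * (4 * c ^ 2 - 3) ^ 2 / 2 :=
    div_nonneg (mul_nonneg (sub_nonneg.mpr hc₂) (sq_nonneg _)) zero_le_two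
  rcases le_or_gt 0 (1 + 2 * c) with hpos | hneg
  · nlinarith [mul_nonneg (pow_nonneg hpos μ) hq]
  · have hpow : -1 ≤ (1 + 2 * c) ^ μ := by
      refine le_trans ?_ (neg_abs_le _)
      rw [neg_le_neg_iff, abs_pow]
      exact pow_le_one₀ (abs_nonneg _) (abs_le.mpr ⟨by linarith, by linarith⟩)
    have hq4 : (1 - c) * (4 * c ^ 2 - 3) ^ 2 / 2 ≤ 4 := by
      have hsq : (4 * c ^ 2 - 3) ^ 2 ≤ 4 := by
        nlinarith [mul_nonneg (by nlinarith : 0 ≤ 4 - 4 * c ^ 2) (by nlinarith : 0 ≤ 4 * c ^ 2 - 1)]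
      nlinarith
    nlinarith [mul_nonneg (neg_le_iff_add_nonneg.mp hpow) hq]

noncomputable def integrandPolyIntegral (μ : ℕ) : ℝ := ∫ x in (0:ℝ)..π, integrandPoly μ (cos x)

theorem integrandPolyIntegral_add_two_ge (μ : ℕ) :
    2 * integrandPolyIntegral (μ + 1) + 2 * integrandPolyIntegral μ - 4 * π ≤
      integrandPolyIntegral (μ + 2) := by
  have hint : ∀ ν, IntervalIntegrable (fun x => integrandPoly ν (cos x)) MeasureTheory.volume 0 π :=
    fun ν => (by unfold integrandPoly; fun_prop : Continuous _).intervalIntegrable _ _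
  have hmono := integral_mono_on pi_pos.le intervalIntegrable_const
    ((hint _).sub (((hint _).const_mul 2).add ((hint _).const_mul 2)))
    fun x _ => neg_four_le_integrandPoly_add_two_sub ⟨neg_one_le_cos x, cos_le_one x⟩ μ
  rw [integral_const, integral_sub (hint _) (((hint _).const_mul 2).add ((hint _).const_mul 2)),
    integral_add ((hint _).const_mul 2) ((hint _).const_mul 2), integral_const_mul,
    integral_const_mul, smul_eq_mul] at hmono
  simp only [integrandPolyIntegral]
  linarith

-- `![-3/2, 3/2, 2, -2]` lists the coefficients of `(1 - c) * (2 * c ^ 2 - 3 / 2)`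
def integrandPolyCoeff (μ k : ℕ) (i : Fin 4) : ℚ := μ.choose k * 2 ^ k * ![-3/2, 3/2, 2, -2] i

def integrandPolyMean (μ : ℕ) : ℚ :=
  ∑ k ∈ range (μ + 1), ∑ i : Fin 4, integrandPolyCoeff μ k i * cosPowMean (k + i)

theorem integrandPoly_eq_sum (μ : ℕ) (c : ℝ) :
    integrandPoly μ c =
      ∑ p ∈ range (μ + 1) ×ˢ univ, (integrandPolyCoeff μ p.1 p.2 : ℝ) * c ^ (p.1 + p.2) := by
  rw [sum_product, integrandPoly, add_comm, add_pow, sum_mul]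
  refine sum_congr rfl fun k _ => ?_
  simp only [Fin.sum_univ_four, integrandPolyCoeff, Matrix.cons_val, Fin.coe_ofNat_eq_mod,
    Nat.reduceMod]
  push_cast
  ring

theorem integrandPolyIntegral_eq (μ : ℕ) : integrandPolyIntegral μ = π * integrandPolyMean μ := by
  simp_rw [integrandPolyIntegral, integrandPoly_eq_sum]
  rw [integral_sum_mul_cos_pow, integrandPolyMean, sum_product]
  push_cast
  rfl

theorem integrandPolyMean_fourteen : integrandPolyMean 14 = 207 / 2 := by
  simp [integrandPolyMean, integrandPolyCoeff, cosPowMean, sum_range_succ, Fin.sum_univ_four,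
    Nat.choose]
  norm_num

theorem integrandPolyMean_fifteen : integrandPolyMean 15 = 2424 := by
  simp [integrandPolyMean, integrandPolyCoeff, cosPowMean, sum_range_succ, Fin.sum_univ_four,
    Nat.choose]
  norm_num

theorem two_pi_le_integrandPolyIntegral {μ : ℕ} (hμ : 14 ≤ μ) :
    2 * π ≤ integrandPolyIntegral μ := by
  suffices h : 2 * π ≤ integrandPolyIntegral μ ∧ 2 * π ≤ integrandPolyIntegral (μ + 1) from h.1
  induction μ, hμ using Nat.le_induction with
  | base =>
    rw [integrandPolyIntegral_eq, integrandPolyIntegral_eq, integrandPolyMean_fourteen,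
      integrandPolyMean_fifteen]
    push_cast
    constructor <;> nlinarith [pi_pos]
  | succ μ _ ih =>
    refine ⟨ih.2, show 2 * π ≤ integrandPolyIntegral (μ + 2) from ?_⟩
    linarith [integrandPolyIntegral_add_two_ge μ, ih.1, ih.2, pi_pos]

open Real in
/-- For every integer `μ ≥ 14`,
`∫₀^{π/2} (sin 3θ / sin θ)^μ · (sin 5θ · sin θ − sin² 2θ) dθ > 0`. -/
theorem integral_a_two_pos (μ : ℕ) (hμ : 14 ≤ μ) :
    0 < ∫ θ in (0:ℝ)..(π / 2),
      (sin (3 * θ) / sin θ) ^ μ * (sin (5 * θ) * sin θ - (sin (2 * θ)) ^ 2) := by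
  simp only [integrand_eq_integrandPoly, integral_comp_cos_two_mul (integrandPoly μ)]
  exact half_pos ((mul_pos two_pos pi_pos).trans_le (two_pi_le_integrandPolyIntegral hμ))
end

section
/- For every integer μ ≥ 14, ∫_0^{π/3} (sin(3θ)/sin θ)^μ · ( sin(5θ)·sin θ − sin²(2θ) ) dθ > π/4. -/
/-!
In the variable `t = sin² θ` the integrand is `(3 - 4t)^μ · t(1 - 16t + 16t²)`, and on the
range `0 ≤ t ≤ 3/4` the factors `3 - 4t - (1 + √3)` and `1 - 16t + 16t²` change sign at the
same point `t = sin²(π/12)`. Hence the integral for the exponent `14 + m` is at least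
`(1 + √3)^m` times the integral for the exponent `14`, and the latter is computed exactly,
`69π/2 + 531441√3/17017`, from an antiderivative `A θ + sin θ cos θ S(sin² θ)` with `S` a
polynomial.
-/

open Real Polynomial

noncomputable section

def integrandSinSq (μ : ℕ) (t : ℝ) : ℝ :=
  (3 - 4 * t) ^ μ * (t * (1 - 16 * t + 16 * t ^ 2))

theorem sin_three_mul_div_sin {x : ℝ} (hx : sin x ≠ 0) :
    sin (3 * x) / sin x = 3 - 4 * sin x ^ 2 := by
  rw [sin_three_mul]
  field_simp

theorem sin_five_mul_mul_sin_sub_sin_two_mul_sq (x : ℝ) :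
    sin (5 * x) * sin x - sin (2 * x) ^ 2
      = sin x ^ 2 * (1 - 16 * sin x ^ 2 + 16 * (sin x ^ 2) ^ 2) := by
  rw [show 5 * x = 2 * x + 3 * x by ring, sin_add, sin_two_mul, cos_two_mul, sin_three_mul,
    cos_three_mul]
  linear_combination
    (8 * sin x ^ 2 * cos x ^ 2 - 16 * sin x ^ 4 + 4 * sin x ^ 2) * sin_sq_add_cos_sq x

theorem integrand_eq_integrandSinSq (μ : ℕ) (θ : ℝ) :
    (sin (3 * θ) / sin θ) ^ μ * (sin (5 * θ) * sin θ - sin (2 * θ) ^ 2)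
      = integrandSinSq μ (sin θ ^ 2) := by
  rw [sin_five_mul_mul_sin_sub_sin_two_mul_sq, integrandSinSq]
  by_cases hθ : sin θ = 0
  · simp [hθ]
  · rw [sin_three_mul_div_sin hθ]

theorem sin_sq_le_three_quarters {θ : ℝ} (hθ : |θ| ≤ π / 3) : sin θ ^ 2 ≤ 3 / 4 := by
  have hcos : 1 / 2 ≤ cos θ := by
    rw [← cos_abs, ← cos_pi_div_three]
    exact cos_le_cos_of_nonneg_of_le_pi (abs_nonneg θ) (by linarith [pi_pos]) hθ
  nlinarith [sin_sq_add_cos_sq θ]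

theorem pow_mul_pow_mul_le_pow_add_mul {R : Type*} [CommRing R] [LinearOrder R]
    [IsStrictOrderedRing R] {β w c : R} (m n : ℕ) (hβ : 0 ≤ β) (hw : 0 ≤ w)
    (h : 0 ≤ (w - β) * c) : β ^ m * (w ^ n * c) ≤ w ^ (n + m) * c := by
  rw [show w ^ (n + m) * c = w ^ m * (w ^ n * c) by ring]
  rcases lt_trichotomy c 0 with hc | rfl | hc
  · have hwβ : w ≤ β := by nlinarith
    exact mul_le_mul_of_nonpos_right (pow_le_pow_left₀ hw hwβ m)
      (mul_nonpos_of_nonneg_of_nonpos (pow_nonneg hw n) hc.le)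
  · simp
  · have hβw : β ≤ w := by nlinarith
    exact mul_le_mul_of_nonneg_right (pow_le_pow_left₀ hβ hβw m)
      (mul_nonneg (pow_nonneg hw n) hc.le)

/-- `1 + √3` is the value of `3 - 4t` at the root `t = (2 - √3)/4 = sin²(π/12)` of
`1 - 16t + 16t²`. -/
theorem one_add_sqrt_three_pow_mul_integrandSinSq_le (m n : ℕ) {t : ℝ} (ht₀ : 0 ≤ t)
    (ht : t ≤ 3 / 4) : (1 + √3) ^ m * integrandSinSq n t ≤ integrandSinSq (n + m) t := by
  have hsqrt : (√3) ^ 2 = 3 := sq_sqrt (by norm_num)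
  have hone : 1 ≤ √3 := one_le_sqrt.mpr (by norm_num)
  refine pow_mul_pow_mul_le_pow_add_mul m n (by positivity) (by linarith) ?_
  have hfactor : (3 - 4 * t - (1 + √3)) * (t * (1 - 16 * t + 16 * t ^ 2))
      = t * (2 - √3 - 4 * t) ^ 2 * (2 + √3 - 4 * t) := by
    linear_combination t * (2 - 4 * t - √3) * hsqrt
  rw [hfactor]
  exact mul_nonneg (mul_nonneg ht₀ (sq_nonneg _)) (by linarith)

theorem integral_one_add_sqrt_three_pow_mul_le (m n : ℕ) :
    (1 + √3) ^ m * ∫ θ in (0 : ℝ)..(π / 3), integrandSinSq n (sin θ ^ 2)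
      ≤ ∫ θ in (0 : ℝ)..(π / 3), integrandSinSq (n + m) (sin θ ^ 2) := by
  rw [← intervalIntegral.integral_const_mul]
  have hcont (k : ℕ) : Continuous fun θ => integrandSinSq k (sin θ ^ 2) := by
    unfold integrandSinSq
    fun_prop
  refine intervalIntegral.integral_mono_on (by positivity)
    (((hcont n).const_mul _).intervalIntegrable _ _) ((hcont _).intervalIntegrable _ _)
    fun θ hθ => ?_
  exact one_add_sqrt_three_pow_mul_integrandSinSq_le m n (sq_nonneg _)
    (sin_sq_le_three_quarters ((abs_of_nonneg hθ.1).trans_le hθ.2))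

/-- `(1 - 2t) S(t) + 2t(1 - t) S'(t)`, at `t = sin² θ`, is the derivative of
`sin θ cos θ S(sin² θ)`. -/
theorem integral_comp_sin_sq_eq_sub {S S' Q : ℝ → ℝ} {A : ℝ}
    (hS : ∀ t, HasDerivAt S (S' t) t)
    (hQ : ∀ t, (1 - 2 * t) * S t + 2 * t * (1 - t) * S' t + A = Q t) (hQc : Continuous Q)
    (a b : ℝ) :
    ∫ θ in a..b, Q (sin θ ^ 2)
      = (sin b * cos b * S (sin b ^ 2) + A * b) - (sin a * cos a * S (sin a ^ 2) + A * a) := by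
  have hcont : Continuous fun θ => Q (sin θ ^ 2) := by fun_prop
  refine intervalIntegral.integral_eq_sub_of_hasDerivAt
    (f := fun θ => sin θ * cos θ * S (sin θ ^ 2) + A * θ) (fun θ _ => ?_)
    (hcont.intervalIntegrable a b)
  have hsc := (hasDerivAt_sin θ).mul (hasDerivAt_cos θ)
  have hSsin := (hS (sin θ ^ 2)).comp θ ((hasDerivAt_sin θ).pow 2)
  convert (hsc.mul hSsin).add ((hasDerivAt_id θ).const_mul A) using 1
  · rfl
  rw [← hQ]
  simp only [Pi.mul_apply, Pi.pow_apply, Function.comp_apply, Nat.cast_ofNat]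
  linear_combination -(S (sin θ ^ 2) + 2 * sin θ ^ 2 * S' (sin θ ^ 2)) * sin_sq_add_cos_sq θ

/-- Obtained from `(1 - 2t) S + 2t(1 - t) S' + 207/2 = integrandSinSq 14` by matching
coefficients from the top degree down. -/
def primitive14 : ℝ[X] :=
  C (-207/2) + C 1594254 * X + C (-159432576/5) * X ^ 2 + C (10437499584/35) * X ^ 3
    + C (-60472476032/35) * X ^ 4 + C (533843267840/77) * X ^ 5
    + C (-20427358817280/1001) * X ^ 6 + C (32543413221376/715) * X ^ 7
    + C (-952081918459904/12155) * X ^ 8 + C (1274605486866432/12155) * X ^ 9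
    + C (-1858419774455808/17017) * X ^ 10 + C (135759843557376/1547) * X ^ 11
    + C (-413309174022144/7735) * X ^ 12 + C (42597066211328/1785) * X ^ 13
    + C (-1881933873152/255) * X ^ 14 + C (24024973312/17) * X ^ 15
    + C (-2147483648/17) * X ^ 16

theorem primitive14_spec (t : ℝ) :
    (1 - 2 * t) * primitive14.eval t + 2 * t * (1 - t) * (derivative primitive14).eval t
      + 207 / 2 = integrandSinSq 14 t := by
  simp only [primitive14, integrandSinSq, derivative_add, derivative_C_mul_X_pow,
    derivative_C_mul_X, derivative_C, eval_add, eval_mul, eval_C, eval_X, eval_pow]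
  norm_num
  ring

theorem primitive14_eval_three_quarters : primitive14.eval (3 / 4) = 2125764 / 17017 := by
  simp only [primitive14, eval_add, eval_mul, eval_C, eval_X, eval_pow]
  norm_num

theorem integral_integrandSinSq_fourteen :
    ∫ θ in (0 : ℝ)..(π / 3), integrandSinSq 14 (sin θ ^ 2)
      = 69 * π / 2 + 531441 / 17017 * √3 := by
  rw [integral_comp_sin_sq_eq_sub (fun t => primitive14.hasDerivAt t) primitive14_spec
    (by unfold integrandSinSq; fun_prop), sin_pi_div_three, cos_pi_div_three, sin_zero,
    div_pow, sq_sqrt (by norm_num : (0 : ℝ) ≤ 3), show (3 : ℝ) / 2 ^ 2 = 3 / 4 by norm_num,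
    primitive14_eval_three_quarters]
  ring

end

open Real in
/-- For every integer `μ ≥ 14`,
`∫₀^{π/3} (sin 3θ / sin θ)^μ · (sin 5θ · sin θ − sin² 2θ) dθ > π/4`. -/
theorem integral_a_two_lower_bound (μ : ℕ) (hμ : 14 ≤ μ) :
    π / 4 < ∫ θ in (0:ℝ)..(π / 3),
      (sin (3 * θ) / sin θ) ^ μ * (sin (5 * θ) * sin θ - (sin (2 * θ)) ^ 2) := by
  obtain ⟨m, rfl⟩ := Nat.exists_eq_add_of_le hμ
  simp only [integrand_eq_integrandSinSq]
  have hβ : 1 ≤ (1 + √3) ^ m := one_le_pow₀ (by linarith [sqrt_nonneg 3])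
  calc π / 4 < 69 * π / 2 + 531441 / 17017 * √3 := by linarith [pi_pos, sqrt_nonneg 3]
    _ ≤ (1 + √3) ^ m * (69 * π / 2 + 531441 / 17017 * √3) :=
      le_mul_of_one_le_left (by positivity) hβ
    _ = (1 + √3) ^ m * ∫ θ in (0 : ℝ)..(π / 3), integrandSinSq 14 (sin θ ^ 2) := by
      rw [integral_integrandSinSq_fourteen]
    _ ≤ _ := integral_one_add_sqrt_three_pow_mul_le m 14
end

section
/- Let a ≥ 3 be an integer. For every θ ∈ (0, π/(a+1)] one has λ_a(θ) = sin((a+1)θ)/sin θ ≥ 0, and for every θ ∈ [0, π/(a+1)] one has F_a(θ) = 1 − 2cos(2aθ) + cos(2(a+1)θ) ≥ 0. -/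
/-!
With `A = aθ` and `t = θ`, the double-angle formulas and `sin (A + 2t) - sin A = 2 sin t cos (A + t)`
give `F_a(θ) = 2 (sin (A + t) sin (A - t) - sin A (sin (A + 2t) - sin A))`.
When `A + t ≥ π/2` the subtracted product is `≤ 0`. Otherwise `sin A ≤ sin (A + t)`, and
`sin (A + 2t) ≤ sin (A - t) + sin 3t ≤ sin (A - t) + sin A` because `3t ≤ A`, i.e. `a ≥ 3`.
-/

open Real

lemma sin_add_two_mul_sub_sin (A t : ℝ) : sin (A + 2 * t) - sin A = 2 * sin t * cos (A + t) := by
  rw [sin_sub_sin]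
  ring_nf

lemma one_sub_two_mul_cos_two_mul_add_cos_eq (A t : ℝ) :
    1 - 2 * cos (2 * A) + cos (2 * (A + t)) =
      2 * (sin (A + t) * sin (A - t) - sin A * (sin (A + 2 * t) - sin A)) := by
  rw [sin_add_two_mul_sub_sin, cos_two_mul, cos_two_mul]
  simp only [cos_add, sin_add, sin_sub]
  linear_combination (2 * cos A ^ 2 - 2 * sin A ^ 2) * sin_sq_add_cos_sq t -
    2 * sin_sq_add_cos_sq A

section

variable {A t : ℝ}

lemma sin_add_two_mul_sub_sin_le_sin_sub (ht : 0 ≤ t) (hA : 3 * t ≤ A) (hAt : A + t ≤ π / 2) :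
    sin (A + 2 * t) - sin A ≤ sin (A - t) := by
  have h3t : sin (3 * t) ≤ sin A :=
    sin_le_sin_of_le_of_le_pi_div_two (by linarith) (by linarith) hA
  have hsub : 0 ≤ sin (A - t) := sin_nonneg_of_nonneg_of_le_pi (by linarith) (by linarith)
  have hsin3 : 0 ≤ sin (3 * t) := sin_nonneg_of_nonneg_of_le_pi (by linarith) (by linarith)
  calc sin (A + 2 * t) - sin A
      = sin (A - t) * cos (3 * t) + cos (A - t) * sin (3 * t) - sin A := by
        rw [← sin_add]; ring_nf
    _ ≤ sin (A - t) + sin (3 * t) - sin A := by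
        gcongr
        · exact mul_le_of_le_one_right hsub (cos_le_one _)
        · exact mul_le_of_le_one_left hsin3 (cos_le_one _)
    _ ≤ sin (A - t) := by linarith

theorem one_sub_two_mul_cos_two_mul_add_cos_nonneg (ht : 0 ≤ t) (hA : 3 * t ≤ A)
    (hAt : A + t ≤ π) : 0 ≤ 1 - 2 * cos (2 * A) + cos (2 * (A + t)) := by
  rw [one_sub_two_mul_cos_two_mul_add_cos_eq]
  have hsin_add : 0 ≤ sin (A + t) := sin_nonneg_of_nonneg_of_le_pi (by linarith) hAt
  have hsin_sub : 0 ≤ sin (A - t) := sin_nonneg_of_nonneg_of_le_pi (by linarith) (by linarith)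
  have hsin : 0 ≤ sin A := sin_nonneg_of_nonneg_of_le_pi (by linarith) (by linarith)
  have hsin_t : 0 ≤ sin t := sin_nonneg_of_nonneg_of_le_pi ht (by linarith)
  suffices sin A * (sin (A + 2 * t) - sin A) ≤ sin (A + t) * sin (A - t) by linarith
  rcases le_total (A + t) (π / 2) with hsmall | hlarge
  · have hdiff : 0 ≤ sin (A + 2 * t) - sin A := by
      rw [sin_add_two_mul_sub_sin]
      have := cos_nonneg_of_mem_Icc ⟨by linarith, hsmall⟩
      positivity
    exact mul_le_mul (sin_le_sin_of_le_of_le_pi_div_two (by linarith) hsmall (by linarith))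
      (sin_add_two_mul_sub_sin_le_sin_sub ht hA hsmall) hdiff hsin_add
  · have hdiff : sin (A + 2 * t) - sin A ≤ 0 := by
      rw [sin_add_two_mul_sub_sin]
      exact mul_nonpos_of_nonneg_of_nonpos (by positivity)
        (cos_nonpos_of_pi_div_two_le_of_le hlarge (by linarith))
    linarith [mul_nonneg hsin_add hsin_sub, mul_nonpos_of_nonneg_of_nonpos hsin hdiff]

end

open Real in
/-- For an integer `a ≥ 3`: on `(0, π/(a+1)]` one has `λ_a(θ) = sin((a+1)θ)/sin θ ≥ 0`,
and on `[0, π/(a+1)]` one has `F_a(θ) = 1 − 2cos(2aθ) + cos(2(a+1)θ) ≥ 0`. -/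
theorem lambda_F_nonneg (a : ℕ) (ha : 3 ≤ a) :
    (∀ θ : ℝ, 0 < θ → θ ≤ π / ((a : ℝ) + 1) →
      0 ≤ sin (((a : ℝ) + 1) * θ) / sin θ) ∧
    (∀ θ : ℝ, 0 ≤ θ → θ ≤ π / ((a : ℝ) + 1) →
      0 ≤ 1 - 2 * cos (2 * (a : ℝ) * θ) + cos (2 * ((a : ℝ) + 1) * θ)) := by
  have ha' : (3 : ℝ) ≤ a := by exact_mod_cast ha
  have hle_pi {θ : ℝ} (hθ : θ ≤ π / ((a : ℝ) + 1)) : ((a : ℝ) + 1) * θ ≤ π := by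
    rwa [le_div_iff₀ (by positivity), mul_comm] at hθ
  constructor
  · intro θ hθ hθπ
    have := hle_pi hθπ
    exact div_nonneg (sin_nonneg_of_nonneg_of_le_pi (by positivity) this)
      (sin_nonneg_of_nonneg_of_le_pi hθ.le (by nlinarith))
  · intro θ hθ hθπ
    have := hle_pi hθπ
    rw [mul_assoc, show 2 * ((a : ℝ) + 1) * θ = 2 * (a * θ + θ) by ring]
    exact one_sub_two_mul_cos_two_mul_add_cos_nonneg hθ (by nlinarith) (by linarith)
end

section
/- Let a ≥ 1 be an integer. For every θ ∈ (0, π/(a+1)], the bound ((a+1)²/π)·(π/(a+1) − θ) ≤ sin((a+1)θ)/sin θ holds; that is, the linear function ℓ_a(θ) = ((a+1)²/π)(π/(a+1) − θ) through (0, a+1) and (π/(a+1), 0) bounds λ_a from below on this interval. -/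
/-!
On `[0, π]` the sine lies above the parabola `x (π - x) / π` through its zeros; on `[0, π/2]` this
follows by comparing derivatives (`cos x ≥ 1 - 2x/π`), and on `[π/2, π]` by the symmetry
`x ↦ π - x`. For `n = a + 1` and `0 < θ ≤ π/n`, the bound `sin θ ≤ θ` then gives
`ℓ_a(θ) sin θ ≤ ℓ_a(θ) θ = nθ (π - nθ) / π ≤ sin (nθ)`.
-/

open Real Set

namespace Real

lemma mul_pi_sub_div_pi_le_sin_of_le_pi_div_two {x : ℝ} (hx₀ : 0 ≤ x) (hx : x ≤ π / 2) :
    x * (π - x) / π ≤ sin x := by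
  set f : ℝ → ℝ := fun t ↦ sin t - t * (π - t) / π
  have hf' (t : ℝ) : HasDerivAt f (cos t - (1 - 2 / π * t)) t := by
    refine ((hasDerivAt_sin t).sub
      (((hasDerivAt_id' t).mul ((hasDerivAt_id' t).const_sub π)).div_const π)).congr_deriv ?_
    field_simp
    ring
  have hmono : MonotoneOn f (Icc 0 (π / 2)) := by
    refine monotoneOn_of_deriv_nonneg (convex_Icc _ _) (by fun_prop)
      (fun t _ ↦ (hf' t).differentiableAt.differentiableWithinAt) fun t ht ↦ ?_
    rw [interior_Icc] at ht
    rw [(hf' t).deriv, sub_nonneg]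
    exact one_sub_mul_le_cos ht.1.le ht.2.le
  have := hmono ⟨le_rfl, by positivity⟩ ⟨hx₀, hx⟩ hx₀
  simp only [f, sin_zero, zero_mul, zero_div, sub_zero] at this
  linarith

lemma mul_pi_sub_div_pi_le_sin {x : ℝ} (hx₀ : 0 ≤ x) (hx : x ≤ π) :
    x * (π - x) / π ≤ sin x := by
  rcases le_total x (π / 2) with h | h
  · exact mul_pi_sub_div_pi_le_sin_of_le_pi_div_two hx₀ h
  · have := mul_pi_sub_div_pi_le_sin_of_le_pi_div_two (x := π - x) (by linarith) (by linarith)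
    rwa [sin_pi_sub, sub_sub_cancel, mul_comm] at this

end Real

open Real in
/-- For an integer `a ≥ 1` and `θ ∈ (0, π/(a+1)]`, the linear function
`ℓ_a(θ) = ((a+1)²/π)(π/(a+1) − θ)` bounds `λ_a(θ) = sin((a+1)θ)/sin θ` from below. -/
theorem linear_lower_bound_lambda (a : ℕ) (ha : 1 ≤ a) :
    ∀ θ : ℝ, 0 < θ → θ ≤ π / ((a : ℝ) + 1) →
      ((a : ℝ) + 1) ^ 2 / π * (π / ((a : ℝ) + 1) - θ) ≤
        sin (((a : ℝ) + 1) * θ) / sin θ := by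
  intro θ hθ hθn
  set n : ℝ := (a : ℝ) + 1
  have hn : 2 ≤ n := by
    have : (1 : ℝ) ≤ a := by exact_mod_cast ha
    linarith
  have hnθ : n * θ ≤ π := (le_div_iff₀' (by positivity)).mp hθn
  have hsin : 0 < sin θ := sin_pos_of_pos_of_lt_pi hθ (by nlinarith [pi_pos])
  have hℓ : 0 ≤ n ^ 2 / π * (π / n - θ) := mul_nonneg (by positivity) (sub_nonneg.mpr hθn)
  rw [le_div_iff₀ hsin]
  calc n ^ 2 / π * (π / n - θ) * sin θ
      ≤ n ^ 2 / π * (π / n - θ) * θ := mul_le_mul_of_nonneg_left (sin_le hθ.le) hℓ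
    _ = n * θ * (π - n * θ) / π := by field_simp
    _ ≤ sin (n * θ) := mul_pi_sub_div_pi_le_sin (by positivity) hnθ
end

section
/- For all integers a ≥ 3 and μ ≥ 3, ∫_0^{π/(a+1)} λ_a(θ)^{μ+1} · F_a(θ) dθ ≥ ( (a+1)³ / (3(a+1)² − 4) ) · ∫_0^{π/(a+1)} λ_a(θ)^μ · F_a(θ) dθ. -/
/-!
Put `A = a + 1` and `c = A³ / (3A² − 4)`; since `A ≥ 4`, `c ≤ 4A/11`. The claim is that
`∫₀^{π/A} λ^μ (λ − c) F ≥ 0`. Concavity of `sin` gives `λ(θ) ≥ A · sin x / x` whenever `Aθ ≤ x < π`,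
and `F = 4 sin²(aθ) − 2 sin²(Aθ) ≥ sin²(Aθ) / 4 ≥ 0`. So the integrand is nonnegative on
`[0, 7π/(10A)]`, where `λ ≥ 4A/11 ≥ c`, and at least `(8A/11)^μ (4A/11) / 8` on `[π/(4A), 2π/(5A)]`,
where `λ ≥ 8A/11` and `F ≥ 1/8`. On the rest, `[7π/(10A), π/A]`, it is at least
`−(27/64) c^{μ+1}` because `x^μ (c − x) ≤ (27/256) c^{μ+1}` for `x ≥ 0` and `μ ≥ 3`; as `2^μ ≥ 8`,
this loss is smaller than the gain on the middle interval.
-/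

open Real Set MeasureTheory Polynomial

theorem Real.mul_sin_le_sin_mul {t y : ℝ} (ht₀ : 0 ≤ t) (ht₁ : t ≤ 1) (hy₀ : 0 ≤ y)
    (hy : y ≤ π) : t * sin y ≤ sin (t * y) := by
  simpa using strictConcaveOn_sin_Icc.concaveOn.2 ⟨hy₀, hy⟩ ⟨le_rfl, pi_nonneg⟩ ht₀
    (sub_nonneg.2 ht₁) (by ring)

theorem Real.eight_div_eleven_le_sin_two_pi_div_five_div :
    8 / 11 ≤ sin (2 * π / 5) / (2 * π / 5) := by
  have hcos : 1 - (π / 10) ^ 2 / 2 ≤ cos (π / 10) := one_sub_sq_div_two_le_cos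
  rw [show 2 * π / 5 = π / 2 - π / 10 by ring, sin_pi_div_two_sub,
    le_div_iff₀ (by linarith [pi_pos])]
  nlinarith [pi_lt_d2, pi_pos]

theorem Real.four_div_eleven_le_sin_seven_pi_div_ten_div :
    4 / 11 ≤ sin (7 * π / 10) / (7 * π / 10) := by
  have hsin : sin (7 * π / 10) = (1 + √5) / 4 := by
    rw [show 7 * π / 10 = π / 5 + π / 2 by ring, sin_add_pi_div_two, cos_pi_div_five]
  rw [hsin, le_div_iff₀ (by linarith [pi_pos])]
  nlinarith [pi_lt_d2, Real.sq_sqrt (show (0 : ℝ) ≤ 5 by norm_num), Real.sqrt_nonneg 5]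

theorem pow_mul_sub_le_of_three_le {x c : ℝ} {μ : ℕ} (hx : 0 ≤ x) (hc : 0 ≤ c) (hμ : 3 ≤ μ) :
    x ^ μ * (c - x) ≤ 27 / 256 * c ^ (μ + 1) := by
  rcases le_total c x with hcx | hxc
  · nlinarith [pow_nonneg hx μ, pow_nonneg hc (μ + 1)]
  obtain ⟨k, rfl⟩ := Nat.exists_eq_add_of_le' hμ
  -- `(27/256) c⁴ − x³ (c − x) = (4x − 3c)² (16x² + 8xc + 3c²) / 256`
  have cubic : x ^ 3 * (c - x) ≤ 27 / 256 * c ^ 4 := by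
    nlinarith [mul_nonneg (sq_nonneg (4 * x - 3 * c))
      (by positivity : (0 : ℝ) ≤ 16 * x ^ 2 + 8 * x * c + 3 * c ^ 2)]
  calc x ^ (k + 3) * (c - x) = x ^ k * (x ^ 3 * (c - x)) := by ring
    _ ≤ c ^ k * (27 / 256 * c ^ 4) := by gcongr
    _ = 27 / 256 * c ^ (k + 3 + 1) := by ring

theorem intervalIntegral.mul_sub_le_integral_of_forall_Ioo {f : ℝ → ℝ} {a b m : ℝ} (hab : a ≤ b)
    (hf : IntervalIntegrable f volume a b) (h : ∀ x ∈ Ioo a b, m ≤ f x) :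
    m * (b - a) ≤ ∫ x in a..b, f x := by
  have := intervalIntegral.integral_mono_on_of_le_Ioo hab intervalIntegrable_const hf h
  rwa [intervalIntegral.integral_const, smul_eq_mul, mul_comm] at this

theorem intervalIntegral.integral_nonneg_of_gain_ge_loss {f : ℝ → ℝ} {a t₁ t₂ t₃ b m M : ℝ}
    (hf : IntervalIntegrable f volume a b) (h₁ : a ≤ t₁) (h₂ : t₁ ≤ t₂) (h₃ : t₂ ≤ t₃)
    (h₄ : t₃ ≤ b) (hpos : ∀ x ∈ Ioo a t₃, 0 ≤ f x) (hgain : ∀ x ∈ Ioo t₁ t₂, m ≤ f x)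
    (hloss : ∀ x ∈ Ioo t₃ b, -M ≤ f x) (hbal : M * (b - t₃) ≤ m * (t₂ - t₁)) :
    0 ≤ ∫ x in a..b, f x := by
  have hf' : ∀ {u v}, u ∈ Icc a b → v ∈ Icc a b → IntervalIntegrable f volume u v :=
    fun hu hv => hf.mono_set (uIcc_subset_uIcc (Icc_subset_uIcc hu) (Icc_subset_uIcc hv))
  have ma : a ∈ Icc a b := ⟨le_rfl, by linarith⟩
  have m₁ : t₁ ∈ Icc a b := ⟨h₁, by linarith⟩
  have m₂ : t₂ ∈ Icc a b := ⟨by linarith, by linarith⟩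
  have m₃ : t₃ ∈ Icc a b := ⟨by linarith, h₄⟩
  have mb : b ∈ Icc a b := ⟨by linarith, le_rfl⟩
  rw [← integral_add_adjacent_intervals (hf' ma m₃) (hf' m₃ mb),
    ← integral_add_adjacent_intervals (hf' ma m₂) (hf' m₂ m₃),
    ← integral_add_adjacent_intervals (hf' ma m₁) (hf' m₁ m₂)]
  have i₁ := mul_sub_le_integral_of_forall_Ioo h₁ (hf' ma m₁)
    fun x hx => hpos x ⟨hx.1, hx.2.trans_le (h₂.trans h₃)⟩
  have i₂ := mul_sub_le_integral_of_forall_Ioo h₂ (hf' m₁ m₂) hgain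
  have i₃ := mul_sub_le_integral_of_forall_Ioo h₃ (hf' m₂ m₃)
    fun x hx => hpos x ⟨(h₁.trans h₂).trans_lt hx.1, hx.2⟩
  have i₄ := mul_sub_le_integral_of_forall_Ioo h₄ (hf' m₃ mb) hloss
  linarith

namespace SinRatio

/-- `λ_a(θ)`; at multiples of `π` Lean's division makes it `0` rather than its limit, which only
matters on a null set. -/
noncomputable def lam (a θ : ℝ) : ℝ := sin ((a + 1) * θ) / sin θ

noncomputable def F (a θ : ℝ) : ℝ := 1 - 2 * cos (2 * a * θ) + cos (2 * (a + 1) * θ)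

noncomputable def integrand (a c : ℝ) (μ : ℕ) (θ : ℝ) : ℝ := lam a θ ^ μ * (lam a θ - c) * F a θ

theorem lam_nat_ae_eq (n : ℕ) :
    lam n =ᵐ[volume] fun θ => (Chebyshev.U ℝ n).eval (cos θ) := by
  have hnull : volume {θ : ℝ | sin θ = 0} = 0 := by
    refine Set.Countable.measure_zero ?_ _
    convert Set.countable_range fun k : ℤ => (k : ℝ) * π using 1
    ext θ
    exact sin_eq_zero_iff
  filter_upwards [measure_eq_zero_iff_ae_notMem.1 hnull] with θ hθ
  have hU := Chebyshev.U_real_cos θ n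
  push_cast at hU
  rw [lam, div_eq_iff hθ, hU]

theorem intervalIntegrable_lam_pow_mul (n k : ℕ) {g : ℝ → ℝ} (hg : Continuous g) (u v : ℝ) :
    IntervalIntegrable (fun θ => lam n θ ^ k * g θ) volume u v := by
  have hcont : Continuous fun θ => (Chebyshev.U ℝ n).eval (cos θ) ^ k * g θ := by fun_prop
  refine (hcont.intervalIntegrable u v).congr_ae ?_
  filter_upwards [ae_restrict_of_ae (lam_nat_ae_eq n)] with θ hθ
  rw [hθ]

theorem continuous_F (a : ℝ) : Continuous (F a) := by
  unfold F
  fun_prop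

theorem lam_nonneg {a θ : ℝ} (ha : 0 ≤ a) (hθ : 0 ≤ θ) (hπ : (a + 1) * θ ≤ π) :
    0 ≤ lam a θ :=
  div_nonneg (sin_nonneg_of_nonneg_of_le_pi (by positivity) hπ)
    (sin_nonneg_of_nonneg_of_le_pi hθ (by nlinarith))

/-- Concavity of `sin` puts `sin ((a + 1) θ)` above its chord through `0` and `x`, and
`sin θ ≤ θ`. -/
theorem mul_sin_div_le_lam {a θ x : ℝ} (ha : 0 ≤ a) (hθ : 0 < θ) (hx : (a + 1) * θ ≤ x)
    (hxπ : x < π) : (a + 1) * (sin x / x) ≤ lam a θ := by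
  have hx₀ : 0 < x := by nlinarith
  have hsin : 0 < sin θ := sin_pos_of_pos_of_lt_pi hθ (by nlinarith)
  have chord := mul_sin_le_sin_mul (t := (a + 1) * θ / x) (by positivity)
    ((div_le_one hx₀).2 hx) hx₀.le hxπ.le
  rw [div_mul_cancel₀ _ hx₀.ne'] at chord
  calc (a + 1) * (sin x / x) = (a + 1) * θ / x * sin x / θ := by field_simp
    _ ≤ sin ((a + 1) * θ) / θ := by gcongr
    _ ≤ lam a θ := div_le_div_of_nonneg_left
      (sin_nonneg_of_nonneg_of_le_pi (by positivity) (by linarith)) hsin (sin_le hθ.le)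

theorem F_eq (a θ : ℝ) : F a θ = 4 * sin (a * θ) ^ 2 - 2 * sin ((a + 1) * θ) ^ 2 := by
  rw [F, mul_assoc, mul_assoc, cos_two_mul, cos_two_mul, cos_sq', cos_sq']
  ring

theorem F_le_four (a θ : ℝ) : F a θ ≤ 4 := by
  rw [F]
  linarith [neg_one_le_cos (2 * a * θ), cos_le_one (2 * (a + 1) * θ)]

theorem sin_sq_div_four_le_F {a θ : ℝ} (ha : 3 ≤ a) (hθ : 0 ≤ θ) (hπ : (a + 1) * θ ≤ π) :
    sin ((a + 1) * θ) ^ 2 / 4 ≤ F a θ := by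
  have chord := mul_sin_le_sin_mul (t := a / (a + 1)) (by positivity)
    ((div_le_one (by linarith)).2 (by linarith)) (by positivity) hπ
  rw [show a / (a + 1) * ((a + 1) * θ) = a * θ by field_simp] at chord
  have hratio : 3 / 4 ≤ a / (a + 1) := by rw [le_div_iff₀ (by linarith)]; linarith
  have hs : 0 ≤ sin ((a + 1) * θ) := sin_nonneg_of_nonneg_of_le_pi (by positivity) hπ
  have : 3 / 4 * sin ((a + 1) * θ) ≤ sin (a * θ) := le_trans (by gcongr) chord
  rw [F_eq]
  nlinarith

section Integrand

variable {a c θ : ℝ} {μ : ℕ}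

theorem integrand_nonneg (ha : 3 ≤ a) (hc : c ≤ 4 * (a + 1) / 11) (hθ : 0 < θ)
    (hθ' : (a + 1) * θ ≤ 7 * π / 10) : 0 ≤ integrand a c μ θ := by
  have hπ : (a + 1) * θ ≤ π := by linarith [pi_pos]
  have hlam : c ≤ lam a θ :=
    calc c ≤ (a + 1) * (4 / 11) := by linarith
      _ ≤ (a + 1) * (sin (7 * π / 10) / (7 * π / 10)) :=
        mul_le_mul_of_nonneg_left four_div_eleven_le_sin_seven_pi_div_ten_div (by linarith)
      _ ≤ lam a θ := mul_sin_div_le_lam (by linarith) hθ hθ' (by linarith [pi_pos])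
  have hF : 0 ≤ F a θ := le_trans (by positivity) (sin_sq_div_four_le_F ha hθ.le hπ)
  exact mul_nonneg (mul_nonneg (pow_nonneg (lam_nonneg (by linarith) hθ.le hπ) μ)
    (sub_nonneg.2 hlam)) hF

theorem gain_le_integrand (ha : 3 ≤ a) (hc : c ≤ 4 * (a + 1) / 11) (h₁ : π / 4 ≤ (a + 1) * θ)
    (h₂ : (a + 1) * θ ≤ 2 * π / 5) :
    (8 * (a + 1) / 11) ^ μ * (4 * (a + 1) / 11) / 8 ≤ integrand a c μ θ := by
  have hθ : 0 < θ := by nlinarith [pi_pos]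
  have hlam : 8 * (a + 1) / 11 ≤ lam a θ :=
    calc 8 * (a + 1) / 11 = (a + 1) * (8 / 11) := by ring
      _ ≤ (a + 1) * (sin (2 * π / 5) / (2 * π / 5)) :=
        mul_le_mul_of_nonneg_left eight_div_eleven_le_sin_two_pi_div_five_div (by linarith)
      _ ≤ lam a θ := mul_sin_div_le_lam (by linarith) hθ h₂ (by linarith [pi_pos])
  have hsin : √2 / 2 ≤ sin ((a + 1) * θ) := by
    rw [← sin_pi_div_four]
    exact sin_le_sin_of_le_of_le_pi_div_two (by linarith [pi_pos]) (by linarith [pi_pos]) h₁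
  have hF : 1 / 8 ≤ F a θ := by
    have hsq := pow_le_pow_left₀ (by positivity) hsin 2
    rw [div_pow, sq_sqrt zero_le_two] at hsq
    linarith [sin_sq_div_four_le_F ha hθ.le (by linarith [pi_pos])]
  have hmain : (8 * (a + 1) / 11) ^ μ * (4 * (a + 1) / 11) ≤ lam a θ ^ μ * (lam a θ - c) :=
    mul_le_mul (pow_le_pow_left₀ (by positivity) hlam μ) (by linarith) (by positivity)
      (pow_nonneg (by linarith) μ)
  calc (8 * (a + 1) / 11) ^ μ * (4 * (a + 1) / 11) / 8
      = (8 * (a + 1) / 11) ^ μ * (4 * (a + 1) / 11) * (1 / 8) := by ring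
    _ ≤ lam a θ ^ μ * (lam a θ - c) * F a θ :=
      mul_le_mul hmain hF (by norm_num) (le_trans (by positivity) hmain)

theorem neg_le_integrand (ha : 3 ≤ a) (hc : 0 ≤ c) (hμ : 3 ≤ μ) (hθ : 0 ≤ θ)
    (hπ : (a + 1) * θ ≤ π) : -(27 / 64 * c ^ (μ + 1)) ≤ integrand a c μ θ := by
  have hlam := lam_nonneg (by linarith) hθ hπ
  have hF : 0 ≤ F a θ := le_trans (by positivity) (sin_sq_div_four_le_F ha hθ hπ)
  have := mul_le_mul (pow_mul_sub_le_of_three_le hlam hc hμ) (F_le_four a θ) hF (by positivity)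
  rw [integrand]
  nlinarith

end Integrand

theorem pow_three_div_mem_Icc {A : ℝ} (hA : 4 ≤ A) :
    A ^ 3 / (3 * A ^ 2 - 4) ∈ Icc 0 (4 * A / 11) := by
  have hden : 0 < 3 * A ^ 2 - 4 := by nlinarith
  exact ⟨by positivity, by rw [div_le_div_iff₀ hden (by norm_num)]; nlinarith⟩

theorem loss_le_gain {A c w : ℝ} {μ : ℕ} (hc₀ : 0 ≤ c) (hc : c ≤ 4 * A / 11) (hw : 0 ≤ w)
    (hμ : 3 ≤ μ) :
    27 / 64 * c ^ (μ + 1) * (3 / 10 * w) ≤ (8 * A / 11) ^ μ * (4 * A / 11) / 8 * (3 / 20 * w) := by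
  have h2μ : (8 : ℝ) ≤ 2 ^ μ :=
    calc (8 : ℝ) = 2 ^ 3 := by norm_num
      _ ≤ 2 ^ μ := pow_le_pow_right₀ (by norm_num) hμ
  have hq : 0 ≤ (4 * A / 11) ^ (μ + 1) * w := mul_nonneg (pow_nonneg (hc₀.trans hc) _) hw
  calc 27 / 64 * c ^ (μ + 1) * (3 / 10 * w)
      ≤ 27 / 64 * (4 * A / 11) ^ (μ + 1) * (3 / 10 * w) := by gcongr
    _ ≤ 2 ^ μ * (3 / 160) * ((4 * A / 11) ^ (μ + 1) * w) := by nlinarith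
    _ = (8 * A / 11) ^ μ * (4 * A / 11) / 8 * (3 / 20 * w) := by
      rw [show 8 * A / 11 = 2 * (4 * A / 11) by ring, mul_pow, pow_succ]; ring

end SinRatio

open SinRatio

open Real in
/-- For all integers `a ≥ 3` and `μ ≥ 3`, with `λ_a(θ) = sin((a+1)θ)/sin θ` and
`F_a(θ) = 1 − 2cos(2aθ) + cos(2(a+1)θ)`:
`∫₀^{π/(a+1)} λ_a^{μ+1} F_a ≥ ((a+1)³/(3(a+1)² − 4)) ∫₀^{π/(a+1)} λ_a^μ F_a`. -/
theorem inductive_step_estimate (a μ : ℕ) (ha : 3 ≤ a) (hμ : 3 ≤ μ) :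
    (((a : ℝ) + 1) ^ 3 / (3 * ((a : ℝ) + 1) ^ 2 - 4)) *
      ∫ θ in (0:ℝ)..(π / ((a : ℝ) + 1)),
        (sin (((a : ℝ) + 1) * θ) / sin θ) ^ μ *
          (1 - 2 * cos (2 * (a : ℝ) * θ) + cos (2 * ((a : ℝ) + 1) * θ)) ≤
    ∫ θ in (0:ℝ)..(π / ((a : ℝ) + 1)),
      (sin (((a : ℝ) + 1) * θ) / sin θ) ^ (μ + 1) *
        (1 - 2 * cos (2 * (a : ℝ) * θ) + cos (2 * ((a : ℝ) + 1) * θ)) := by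
  have ha' : (3 : ℝ) ≤ a := by exact_mod_cast ha
  have hA : (0 : ℝ) < a + 1 := by linarith
  set c := ((a : ℝ) + 1) ^ 3 / (3 * ((a : ℝ) + 1) ^ 2 - 4)
  obtain ⟨hc₀, hc⟩ := pow_three_div_mem_Icc (A := (a : ℝ) + 1) (by linarith)
  change c * ∫ θ in _.._, lam a θ ^ μ * F a θ ≤ ∫ θ in _.._, lam a θ ^ (μ + 1) * F a θ
  have hint₁ := intervalIntegrable_lam_pow_mul a (μ + 1) (continuous_F a) 0 (π / (a + 1))
  have hint₀ := (intervalIntegrable_lam_pow_mul a μ (continuous_F a) 0 (π / (a + 1))).const_mul c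
  have hH : ∀ θ, lam a θ ^ (μ + 1) * F a θ - c * (lam a θ ^ μ * F a θ) = integrand a c μ θ :=
    fun θ => by rw [integrand]; ring
  have hint := hint₁.sub hint₀
  rw [← sub_nonneg, ← intervalIntegral.integral_const_mul,
    ← intervalIntegral.integral_sub hint₁ hint₀]
  simp_rw [hH] at hint ⊢
  have below : ∀ {θ t : ℝ}, θ < t / (a + 1) → (a + 1) * θ ≤ t := fun h =>
    ((lt_div_iff₀' hA).1 h).le
  have above : ∀ {θ t : ℝ}, t / (a + 1) < θ → t ≤ (a + 1) * θ := fun h =>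
    ((div_lt_iff₀' hA).1 h).le
  refine intervalIntegral.integral_nonneg_of_gain_ge_loss hint (t₁ := π / 4 / (a + 1))
    (t₂ := 2 * π / 5 / (a + 1)) (t₃ := 7 * π / 10 / (a + 1)) (by positivity)
    (div_le_div_of_nonneg_right (by linarith [pi_pos]) hA.le)
    (div_le_div_of_nonneg_right (by linarith [pi_pos]) hA.le)
    (div_le_div_of_nonneg_right (by linarith [pi_pos]) hA.le)
    (fun θ h => integrand_nonneg ha' hc h.1 (below h.2))
    (fun θ h => gain_le_integrand ha' hc (above h.1) (below h.2))
    (fun θ h => neg_le_integrand ha' hc₀ hμ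
      ((by positivity : (0 : ℝ) ≤ 7 * π / 10 / (a + 1)).trans h.1.le) (below h.2)) ?_
  convert loss_le_gain hc₀ hc (div_nonneg pi_pos.le hA.le) hμ using 2 <;> ring
end
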